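/- arXiv:1611.07592 — 6 statements merged into one kernel-verified Lean document; each statement's English description precedes it below -/
import Mathlib

section
/- Let G be a finite connected reflexive graph and let k ≥ c(G). Then capt_k(G) ≥ (diam(G) − k + 1)/(2k). -/
open SimpleGraph Finset

/-- One step of a player in a reflexive graph: stay put (the loop) or move along an edge. -/
def stepRel {V : Type*} (G : SimpleGraph V) (u v : V) : Prop := u = v ∨ G.Adj u v

/-- `CatchIn G t c r`: with the cops currently at positions `c` and the robber at `r`
(cops to move next), the cops can guarantee to capture the robber within `t` further
rounds (a round consists of a cops' move followed by a robber's move; capture means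
some cop occupies the robber's vertex). -/
def CatchIn {V : Type*} (G : SimpleGraph V) {k : ℕ} : ℕ → (Fin k → V) → V → Prop
  | 0, c, r => ∃ i, c i = r
  | (t + 1), c, r => (∃ i, c i = r) ∨
      ∃ c' : Fin k → V, (∀ i, stepRel G (c i) (c' i)) ∧
        ((∃ i, c' i = r) ∨ ∀ r', stepRel G r r' → CatchIn G t c' r')

/-- `k` cops have a strategy capturing the robber within `t` rounds (not counting
round 0, in which the cops choose starting positions and then the robber, knowing
the cops' positions, chooses hers). -/
def CopsWinIn {V : Type*} (G : SimpleGraph V) (k t : ℕ) : Prop :=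
  ∃ c₀ : Fin k → V, ∀ r₀ : V, CatchIn G t c₀ r₀

/-- The cop number: the least `k` such that `k` cops have a winning strategy. -/
noncomputable def copNumber {V : Type*} (G : SimpleGraph V) : ℕ :=
  sInf {k | ∃ t, CopsWinIn G k t}

/-- The `k`-capture time: the least `t` such that `k` cops can guarantee capture
within `t` rounds. -/
noncomputable def captTime {V : Type*} (G : SimpleGraph V) (k : ℕ) : ℕ :=
  sInf {t | CopsWinIn G k t}

/-- The metric `k`-center radius: the least `r` such that some set of at most `k`
vertices is within distance `r` of every vertex. -/
noncomputable def radK {V : Type*} (G : SimpleGraph V) (k : ℕ) : ℕ :=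
  sInf {r | ∃ S : Finset V, S.Nonempty ∧ S.card ≤ k ∧ ∀ v, ∃ s ∈ S, G.dist v s ≤ r}

/-- `H ⊆ V(G)` induces a retract of the reflexive graph `G`: there is a map
`f : V(G) → H` fixing `H` pointwise such that every edge `uv` of `G` is sent to a
single vertex or to an edge. -/
def IsRetract {V : Type*} (G : SimpleGraph V) (H : Set V) : Prop :=
  ∃ f : V → V, (∀ v, f v ∈ H) ∧ (∀ v ∈ H, f v = v) ∧
    ∀ u v, G.Adj u v → f u = f v ∨ G.Adj (f u) (f v)

section Aux

variable {V : Type*}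

lemma stepRel_dist_le {G : SimpleGraph V} {u v : V} (h : stepRel G u v) :
    G.dist u v ≤ 1 := by
  rcases h with rfl | h
  · simp [SimpleGraph.dist_self]
  · simpa using SimpleGraph.dist_le h.toWalk

lemma catchIn_dist {G : SimpleGraph V} (hG : G.Connected) {k : ℕ} :
    ∀ (t : ℕ) (c : Fin k → V) (r : V), CatchIn G t c r → ∃ i, G.dist (c i) r ≤ t := by
  intro t
  induction t with
  | zero =>
    rintro c r ⟨i, hi⟩
    exact ⟨i, by simp [hi, SimpleGraph.dist_self]⟩
  | succ t ih =>
    rintro c r (⟨i, hi⟩ | ⟨c', hstep, (⟨i, hi⟩ | hrob)⟩)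
    · exact ⟨i, by simp [hi, SimpleGraph.dist_self]⟩
    · refine ⟨i, ?_⟩
      calc G.dist (c i) r ≤ G.dist (c i) (c' i) + G.dist (c' i) r := hG.dist_triangle
        _ ≤ 1 + 0 := by
            gcongr <;> [exact stepRel_dist_le (hstep i); simp [hi, SimpleGraph.dist_self]]
        _ ≤ t + 1 := by omega
    · obtain ⟨i, hi⟩ := ih c' r (hrob r (Or.inl rfl))
      refine ⟨i, ?_⟩
      calc G.dist (c i) r ≤ G.dist (c i) (c' i) + G.dist (c' i) r := hG.dist_triangle
        _ ≤ 1 + t := by gcongr; exact stepRel_dist_le (hstep i)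
        _ = t + 1 := by omega

lemma catchIn_comp {G : SimpleGraph V} {k k' : ℕ} (g : Fin k' → Fin k)
    (hg : Function.Surjective g) :
    ∀ (t : ℕ) (c : Fin k → V) (r : V), CatchIn G t c r → CatchIn G t (c ∘ g) r := by
  intro t
  induction t with
  | zero =>
    rintro c r ⟨i, hi⟩
    obtain ⟨i', rfl⟩ := hg i
    exact ⟨i', hi⟩
  | succ t ih =>
    rintro c r (⟨i, hi⟩ | ⟨c', hstep, h⟩)
    · obtain ⟨i', rfl⟩ := hg i
      exact Or.inl ⟨i', hi⟩
    · refine Or.inr ⟨c' ∘ g, fun i => hstep (g i), ?_⟩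
      rcases h with ⟨i, hi⟩ | hrob
      · obtain ⟨i', rfl⟩ := hg i
        exact Or.inl ⟨i', hi⟩
      · exact Or.inr fun r' hr' => ih c' r' (hrob r' hr')

lemma walk_dist_getVert {G : SimpleGraph V} {u v : V} (hG : G.Connected) (p : G.Walk u v) :
    ∀ (d i : ℕ), G.dist (p.getVert i) (p.getVert (i + d)) ≤ d := by
  intro d
  induction d with
  | zero => simp [SimpleGraph.dist_self]
  | succ d ih =>
    intro i
    have hstep : G.dist (p.getVert (i + d)) (p.getVert (i + d + 1)) ≤ 1 := by
      by_cases h : i + d < p.length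
      · simpa using SimpleGraph.dist_le (p.adj_getVert_succ h).toWalk
      · rw [p.getVert_of_length_le (by omega), p.getVert_of_length_le (by omega)]
        simp [SimpleGraph.dist_self]
    calc G.dist (p.getVert i) (p.getVert (i + (d + 1)))
        ≤ G.dist (p.getVert i) (p.getVert (i + d))
          + G.dist (p.getVert (i + d)) (p.getVert (i + d + 1)) := by
          rw [show i + (d + 1) = i + d + 1 by omega]; exact hG.dist_triangle
      _ ≤ d + 1 := by have := ih i; omega

end Aux

/-- For a finite connected reflexive graph `G` and any `k ≥ c(G)`,
`capt_k(G) ≥ (diam(G) - k + 1)/(2k)`. -/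

theorem captTime_ge_diam_bound {V : Type*} [Fintype V] (G : SimpleGraph V)
    (hG : G.Connected) (k : ℕ) (hk : copNumber G ≤ k) :
    ((G.diam : ℝ) - k + 1) / (2 * k) ≤ captTime G k := by
  classical
  haveI : Nonempty V := hG.nonempty
  have hcard : ∃ t, CopsWinIn G (Fintype.card V) t := by
    refine ⟨0, fun i => (Fintype.equivFin V).symm i, fun r₀ => ?_⟩
    exact ⟨Fintype.equivFin V r₀, by simp⟩
  have hmem : ∃ t, CopsWinIn G (copNumber G) t :=
    Nat.sInf_mem (⟨Fintype.card V, hcard⟩ : Set.Nonempty {k | ∃ t, CopsWinIn G k t})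
  obtain ⟨t₀, c₀', hwin'⟩ := hmem
  have hn0 : 0 < copNumber G := by
    obtain ⟨i, -⟩ := catchIn_dist hG t₀ c₀' (Classical.arbitrary V) (hwin' _)
    exact i.pos
  have hk0 : 0 < k := lt_of_lt_of_le hn0 hk
  have hwk : CopsWinIn G k t₀ := by
    refine ⟨c₀' ∘ (fun i : Fin k => (⟨min i.val (copNumber G - 1), by omega⟩ : Fin (copNumber G))), fun r₀ => ?_⟩
    refine catchIn_comp _ ?_ t₀ c₀' r₀ (hwin' r₀)
    intro j
    refine ⟨⟨j.val, lt_of_lt_of_le j.isLt hk⟩, ?_⟩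
    have := j.isLt
    exact Fin.ext (by simp; omega)
  set T := captTime G k with hT
  have hTmem : CopsWinIn G k T := Nat.sInf_mem (⟨t₀, hwk⟩ : Set.Nonempty {t | CopsWinIn G k t})
  obtain ⟨c₀, hcatch⟩ := hTmem
  have hcov : ∀ w : V, ∃ i, G.dist (c₀ i) w ≤ T := fun w => catchIn_dist hG T c₀ w (hcatch w)
  obtain ⟨u, v, huv⟩ := SimpleGraph.exists_dist_eq_diam (G := G)
  obtain ⟨p, hp⟩ := hG.exists_walk_length_eq_dist u v
  set D := G.diam with hD
  have hplen : p.length = D := by rw [hp, huv]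
  have key : D + 1 ≤ k * (2 * T + 1) := by
    by_contra hlt
    push_neg at hlt
    set f : Fin (D + 1) → Fin k := fun j => (hcov (p.getVert j.val)).choose with hf
    have hfspec : ∀ j : Fin (D + 1), G.dist (c₀ (f j)) (p.getVert j.val) ≤ T :=
      fun j => (hcov (p.getVert j.val)).choose_spec
    obtain ⟨i, hi⟩ := Fintype.exists_lt_card_fiber_of_mul_lt_card (f := f) (n := 2 * T + 1)
      (by simpa using hlt)
    set s := Finset.univ.filter (fun j => f j = i) with hs
    set sN := s.image Fin.val with hsN
    have hsNcard : sN.card = s.card := Finset.card_image_of_injective _ Fin.val_injective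
    have hsNne : sN.Nonempty := by
      rw [← Finset.card_pos, hsNcard]; omega
    set a := sN.min' hsNne with ha
    set b := sN.max' hsNne with hb
    have hsub : sN ⊆ Finset.Icc a b := fun x hx =>
      Finset.mem_Icc.mpr ⟨Finset.min'_le _ _ hx, Finset.le_max' _ _ hx⟩
    have hcard2 : sN.card ≤ b + 1 - a := by
      simpa [Nat.card_Icc] using Finset.card_le_card hsub
    have hba : 2 * T + 1 ≤ b - a := by omega
    obtain ⟨ja, hja, hjaval⟩ := Finset.mem_image.mp (sN.min'_mem hsNne)
    obtain ⟨jb, hjb, hjbval⟩ := Finset.mem_image.mp (sN.max'_mem hsNne)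
    rw [← ha] at hjaval
    rw [← hb] at hjbval
    have hfa : f ja = i := (Finset.mem_filter.mp hja).2
    have hfb : f jb = i := (Finset.mem_filter.mp hjb).2
    have h1 : G.dist (c₀ i) (p.getVert a) ≤ T := by rw [← hjaval, ← hfa]; exact hfspec ja
    have h2 : G.dist (c₀ i) (p.getVert b) ≤ T := by rw [← hjbval, ← hfb]; exact hfspec jb
    have hab : a ≤ b := Finset.min'_le _ _ (sN.max'_mem hsNne)
    have hbD : b ≤ D := by
      have := jb.isLt
      omega
    have h1' : G.dist (p.getVert a) (c₀ i) ≤ T := by rw [SimpleGraph.dist_comm]; exact h1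
    have hDab : G.dist (p.getVert a) (p.getVert b) ≤ 2 * T := by
      have := hG.dist_triangle (u := p.getVert a) (v := c₀ i) (w := p.getVert b)
      omega
    have hua : G.dist u (p.getVert a) ≤ a := by
      have := walk_dist_getVert hG p a 0
      simpa using this
    have hbv : G.dist (p.getVert b) v ≤ D - b := by
      have h3 := walk_dist_getVert hG p (p.length - b) b
      rw [show b + (p.length - b) = p.length by omega, p.getVert_length] at h3
      omega
    have t1 : G.dist u v ≤ G.dist u (p.getVert a) + G.dist (p.getVert a) v :=
      hG.dist_triangle
    have t2 : G.dist (p.getVert a) v ≤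
        G.dist (p.getVert a) (p.getVert b) + G.dist (p.getVert b) v := hG.dist_triangle
    omega
  have h2k : (0 : ℝ) < 2 * (k : ℝ) := by
    have : (0 : ℝ) < (k : ℝ) := by exact_mod_cast hk0
    linarith
  rw [div_le_iff₀ h2k]
  have hkey : (D : ℝ) + 1 ≤ (k : ℝ) * (2 * (T : ℝ) + 1) := by exact_mod_cast key
  nlinarith [hkey]
end

section
/- Let G be a finite connected reflexive graph of diameter d, and let P be a shortest path in G with d + 1 vertices (i.e. a geodesic between two vertices at distance d). Then P is a retract of G; in particular, the map sending each vertex of G to the unique vertex of P at the same distance from a fixed endpoint x of P is a retraction. -/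
open SimpleGraph Finset

lemma aux_dist_start_getVert_le {V : Type*} {G : SimpleGraph V} (hG : G.Connected) :
    ∀ {u v : V} (p : G.Walk u v) (i : ℕ), G.dist u (p.getVert i) ≤ i := by
  intro u v p
  induction p with
  | nil => intro i; simp [SimpleGraph.Walk.getVert, SimpleGraph.dist_self]
  | cons h q ih =>
    rename_i a b c
    intro i
    cases i with
    | zero => simp [SimpleGraph.Walk.getVert, SimpleGraph.dist_self]
    | succ j =>
      have h1 := hG.dist_triangle (u := a) (v := b) (w := q.getVert j)
      have h2 : G.dist a b ≤ 1 := G.dist_le h.toWalk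
      have h3 := ih j
      calc G.dist a ((SimpleGraph.Walk.cons h q).getVert (j+1)) = G.dist a (q.getVert j) := rfl
        _ ≤ G.dist a b + G.dist b (q.getVert j) := h1
        _ ≤ j + 1 := by omega

lemma aux_dist_getVert_end_le {V : Type*} {G : SimpleGraph V} :
    ∀ {u v : V} (p : G.Walk u v) (i : ℕ), G.dist (p.getVert i) v ≤ p.length - i := by
  intro u v p
  induction p with
  | nil => intro i; simp [SimpleGraph.Walk.getVert, SimpleGraph.dist_self]
  | cons h q ih =>
    intro i
    cases i with
    | zero =>
      simpa [SimpleGraph.Walk.getVert] using G.dist_le (SimpleGraph.Walk.cons h q)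
    | succ j =>
      have := ih j
      simpa [SimpleGraph.Walk.getVert] using this

/-- In a finite connected reflexive graph of diameter `d`, any geodesic `P` between two
vertices at distance `d` is a retract of `G`; the retraction sends each vertex `v`
to the vertex of `P` at distance `dist x v` from the endpoint `x`. -/
theorem geodesic_isRetract {V : Type*} [Fintype V] (G : SimpleGraph V)
    (hG : G.Connected) (d : ℕ) (hdiam : G.diam = d) (x y : V)
    (p : G.Walk x y) (hpath : p.IsPath) (hlen : p.length = d) (hgeo : G.dist x y = d) :
    ((∀ v, p.getVert (G.dist x v) ∈ p.support) ∧
      (∀ v ∈ p.support, p.getVert (G.dist x v) = v) ∧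
      (∀ u v, G.Adj u v →
        p.getVert (G.dist x u) = p.getVert (G.dist x v) ∨
          G.Adj (p.getVert (G.dist x u)) (p.getVert (G.dist x v)))) ∧
    IsRetract G {v | v ∈ p.support} := by
  classical
  -- ediam is not ⊤
  have hne : G.ediam ≠ ⊤ := by
    intro htop
    have : Nonempty V := ⟨x⟩
    obtain ⟨u, v, huv⟩ := SimpleGraph.exists_edist_eq_ediam_of_finite (G := G)
    exact (SimpleGraph.edist_ne_top_iff_reachable.2 (hG.preconnected u v)) (huv.trans htop)
  have hdle : ∀ v, G.dist x v ≤ d := fun v => hdiam ▸ SimpleGraph.dist_le_diam hne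
  -- dist x (getVert i) = i for i ≤ d
  have hkey : ∀ i ≤ d, G.dist x (p.getVert i) = i := by
    intro i hi
    have h1 := aux_dist_start_getVert_le hG p i
    have h2 := aux_dist_getVert_end_le p i
    have h3 := hG.dist_triangle (u := x) (v := p.getVert i) (w := y)
    rw [hgeo] at h3
    rw [hlen] at h2
    omega
  have part1 : ∀ v, p.getVert (G.dist x v) ∈ p.support := by
    intro v
    rw [SimpleGraph.Walk.mem_support_iff_exists_getVert]
    exact ⟨G.dist x v, rfl, by rw [hlen]; exact hdle v⟩
  have part2 : ∀ v ∈ p.support, p.getVert (G.dist x v) = v := by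
    intro v hv
    obtain ⟨n, hn, hnle⟩ := SimpleGraph.Walk.mem_support_iff_exists_getVert.1 hv
    rw [hlen] at hnle
    rw [← hn, hkey n hnle]
  have part3 : ∀ u v, G.Adj u v →
      p.getVert (G.dist x u) = p.getVert (G.dist x v) ∨
        G.Adj (p.getVert (G.dist x u)) (p.getVert (G.dist x v)) := by
    intro u v huv
    have hd1 : G.dist u v ≤ 1 := G.dist_le huv.toWalk
    have t1 := hG.dist_triangle (u := x) (v := u) (w := v)
    have t2 := hG.dist_triangle (u := x) (v := v) (w := u)
    have hsymm : G.dist v u = G.dist u v := SimpleGraph.dist_comm ..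
    have hu := hdle u
    have hv := hdle v
    set a := G.dist x u with ha
    set b := G.dist x v with hb
    rcases Nat.lt_trichotomy a b with hlt | heq | hgt
    · have hb1 : b = a + 1 := by omega
      right
      rw [hb1]
      exact p.adj_getVert_succ (by omega)
    · left; rw [heq]
    · have ha1 : a = b + 1 := by omega
      right
      rw [ha1]
      exact (p.adj_getVert_succ (by omega)).symm
  exact ⟨⟨part1, part2, part3⟩,
    fun v => p.getVert (G.dist x v), part1, part2, part3⟩
end

section
/- For any finite tree T (viewed as a reflexive graph) and any integer k ≥ 1, capt_k(T) = rad_k(T). -/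
open SimpleGraph Finset

/-!
A robber who never moves is caught within `t` rounds only if some cop starts within distance `t`
of her, so the starting positions of a winning team of `k` cops form a `k`-center of radius `t`.

Conversely, start the cops on the centers `sᵢ` of a `k`-center of radius `r`. In a tree the
retraction of the whole graph onto the ball of radius `r` around `sᵢ` maps steps to steps, so the
robber's shadow in that ball moves at most one step per round. Cop `i` walks along the geodesic
from `sᵢ` towards the shadow: each round it either stays next to the shadow or gets one step
farther from `sᵢ` while remaining on a geodesic from `sᵢ` to the shadow, so after `r` rounds it is
next to the shadow. The cop whose ball contains the robber is then next to the robber herself.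
-/

lemma Finset.exists_subset_range_fin {α : Type*} {S : Finset α} {k : ℕ} (hS : S.Nonempty)
    (hk : S.card ≤ k) : ∃ f : Fin k → α, ∀ a ∈ S, ∃ i, f i = a := by
  obtain ⟨a₀, -⟩ := hS
  refine ⟨fun i => S.toList.getD i a₀, fun a ha => ?_⟩
  obtain ⟨n, hn, rfl⟩ := List.getElem_of_mem (mem_toList.2 ha)
  exact ⟨⟨n, hn.trans_le (by simpa using hk)⟩, List.getD_eq_getElem _ _ hn⟩

section stepRel

variable {V : Type*} {G : SimpleGraph V} {u v : V}

lemma stepRel.symm (h : stepRel G u v) : stepRel G v u :=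
  h.imp Eq.symm Adj.symm

lemma stepRel.dist_le_one (h : stepRel G u v) : G.dist u v ≤ 1 := by
  rcases h with rfl | h
  · simp
  · exact (dist_eq_one_iff_adj.2 h).le

lemma SimpleGraph.Connected.stepRel_of_dist_le_one (hG : G.Connected) (h : G.dist u v ≤ 1) :
    stepRel G u v := by
  rcases Nat.le_one_iff_eq_zero_or_eq_one.1 h with h | h
  · exact Or.inl (hG.dist_eq_zero_iff.1 h)
  · exact Or.inr (dist_eq_one_iff_adj.1 h)

end stepRel

namespace SimpleGraph

variable {V : Type*} {G : SimpleGraph V}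

lemma Connected.dist_add_dist_trans (hG : G.Connected) {s a b u : V}
    (hab : G.dist s a + G.dist a b = G.dist s b) (hbu : G.dist s b + G.dist b u = G.dist s u) :
    G.dist s a + G.dist a u = G.dist s u := by
  have := hG.dist_triangle (u := s) (v := a) (w := u)
  have := hG.dist_triangle (u := a) (v := b) (w := u)
  omega

lemma Connected.exists_dist_add_dist_eq (hG : G.Connected) (s u : V) {n : ℕ}
    (hn : n ≤ G.dist s u) : ∃ a, G.dist s a + G.dist a u = G.dist s u ∧ G.dist s a = n := by
  obtain ⟨p, hp⟩ := hG.exists_walk_length_eq_dist s u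
  have htake := length_eq_dist_of_subwalk hp (p.isSubwalk_take n)
  have hdrop := length_eq_dist_of_subwalk hp (p.isSubwalk_drop n)
  rw [Walk.take_length] at htake
  rw [Walk.drop_length] at hdrop
  exact ⟨p.getVert n, by omega, by omega⟩

lemma IsTree.eq_of_dist_add_dist_eq (hT : G.IsTree) {s u a b : V}
    (ha : G.dist s a + G.dist a u = G.dist s u) (hb : G.dist s b + G.dist b u = G.dist s u)
    (hab : G.dist s a = G.dist s b) : a = b := by
  obtain ⟨p, hp⟩ := hT.connected.exists_walk_length_eq_dist s a
  obtain ⟨p', hp'⟩ := hT.connected.exists_walk_length_eq_dist a u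
  obtain ⟨q, hq⟩ := hT.connected.exists_walk_length_eq_dist s b
  obtain ⟨q', hq'⟩ := hT.connected.exists_walk_length_eq_dist b u
  have hpath : ∀ {c : V} (w : G.Walk s c) (w' : G.Walk c u), w.length = G.dist s c →
      w'.length = G.dist c u → G.dist s c + G.dist c u = G.dist s u →
      (w.append w').IsPath := fun w w' hw hw' hc =>
    (w.append w').isPath_of_length_eq_dist (by rw [Walk.length_append]; omega)
  have heq : p.append p' = q.append q' := congrArg Subtype.val
    ((hT.isAcyclic.subsingleton_path s u).elim
      ⟨_, hpath p p' hp hp' ha⟩ ⟨_, hpath q q' hq hq' hb⟩)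
  have hpq : p.length = q.length := by omega
  have := congrArg (Walk.getVert · p.length) heq
  rwa [Walk.getVert_append', Walk.getVert_append', if_pos le_rfl, if_pos hpq.le,
    Walk.getVert_length, hpq, Walk.getVert_length] at this

lemma IsTree.dist_add_dist_of_dist_le (hT : G.IsTree) {s u a b : V}
    (ha : G.dist s a + G.dist a u = G.dist s u) (hb : G.dist s b + G.dist b u = G.dist s u)
    (hab : G.dist s a ≤ G.dist s b) : G.dist s a + G.dist a b = G.dist s b := by
  obtain ⟨a', ha'b, ha'⟩ := hT.connected.exists_dist_add_dist_eq s b hab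
  obtain rfl : a = a' :=
    hT.eq_of_dist_add_dist_eq ha (hT.connected.dist_add_dist_trans ha'b hb) ha'.symm
  exact ha'b

end SimpleGraph

namespace SimpleGraph.Connected

variable {V : Type*} {G : SimpleGraph V} (hG : G.Connected)

/-- A vertex on a geodesic from `s` to `u` at distance `min r (dist s u)` from `s`; in a tree this
is the retraction of `u` onto the ball of radius `r` around `s`. -/
noncomputable def ballProj (s : V) (r : ℕ) (u : V) : V :=
  (hG.exists_dist_add_dist_eq s u (min_le_right r (G.dist s u))).choose

variable {hG} {s u : V} {r : ℕ}

lemma dist_add_dist_ballProj :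
    G.dist s (hG.ballProj s r u) + G.dist (hG.ballProj s r u) u = G.dist s u :=
  (hG.exists_dist_add_dist_eq s u (min_le_right r (G.dist s u))).choose_spec.1

lemma dist_ballProj : G.dist s (hG.ballProj s r u) = min r (G.dist s u) :=
  (hG.exists_dist_add_dist_eq s u (min_le_right r (G.dist s u))).choose_spec.2

lemma ballProj_eq_self (h : G.dist s u ≤ r) : hG.ballProj s r u = u := by
  have := hG.dist_add_dist_ballProj (s := s) (r := r) (u := u)
  have := hG.dist_ballProj (s := s) (r := r) (u := u)
  exact (hG.dist_eq_zero_iff.1 (by omega))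

end SimpleGraph.Connected

namespace SimpleGraph.IsTree

variable {V : Type*} {G : SimpleGraph V} {s u v : V} {r : ℕ}

lemma stepRel_ballProj_of_adj (hT : G.IsTree) (hadj : G.Adj u v)
    (huv : G.dist s v = G.dist s u + 1) :
    stepRel G (hT.connected.ballProj s r u) (hT.connected.ballProj s r v) := by
  by_cases hv : G.dist s v ≤ r
  · rw [Connected.ballProj_eq_self (by omega), Connected.ballProj_eq_self hv]
    exact Or.inr hadj
  · have hu_v : G.dist s u + G.dist u v = G.dist s v := by
      rw [dist_eq_one_iff_adj.2 hadj, huv]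
    have := Connected.dist_ballProj (hG := hT.connected) (s := s) (r := r) (u := u)
    have := Connected.dist_ballProj (hG := hT.connected) (s := s) (r := r) (u := v)
    exact Or.inl (hT.eq_of_dist_add_dist_eq
      (hT.connected.dist_add_dist_trans Connected.dist_add_dist_ballProj hu_v)
      Connected.dist_add_dist_ballProj (by omega))

lemma stepRel_ballProj (hT : G.IsTree) (h : stepRel G u v) :
    stepRel G (hT.connected.ballProj s r u) (hT.connected.ballProj s r v) := by
  rcases h with rfl | hadj
  · exact Or.inl rfl
  · rcases hT.dist_eq_dist_add_one_of_adj s hadj with huv | huv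
    · exact (hT.stepRel_ballProj_of_adj hadj.symm huv).symm
    · exact hT.stepRel_ballProj_of_adj hadj huv

end SimpleGraph.IsTree

section Chase

variable {V : Type*} {G : SimpleGraph V}

/-- The invariant of a cop at `c` hunting the shadow `y` of the robber in the ball of radius `r`
around `s`, with `t` rounds left. -/
def Chasing (G : SimpleGraph V) (s : V) (r t : ℕ) (c y : V) : Prop :=
  stepRel G c y ∨ (G.dist s c + G.dist c y = G.dist s y ∧ r ≤ G.dist s c + t)

variable {s c y y' : V} {r t : ℕ}

lemma Chasing.stepRel_of_dist_le (hG : G.Connected) (h : Chasing G s r 1 c y)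
    (hy : G.dist s y ≤ r) : stepRel G c y :=
  h.elim id fun ⟨hscy, hr⟩ => hG.stepRel_of_dist_le_one (by omega)

lemma Chasing.step (hT : G.IsTree) (h : Chasing G s r (t + 1) c y) (hy : stepRel G y y') :
    Chasing G s r t (hT.connected.ballProj c 1 y) y' := by
  set c' := hT.connected.ballProj c 1 y
  by_cases hcy : stepRel G c y
  · rw [show c' = y from Connected.ballProj_eq_self hcy.dist_le_one]
    exact Or.inl hy
  obtain ⟨hscy, hr⟩ := h.resolve_left hcy
  have hcy₀ : G.dist c y ≠ 0 := fun h => hcy (Or.inl (hT.connected.dist_eq_zero_iff.1 h))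
  have hcc'y : G.dist c c' + G.dist c' y = G.dist c y := Connected.dist_add_dist_ballProj
  have hcc' : G.dist c c' = min 1 (G.dist c y) := Connected.dist_ballProj
  have := hT.connected.dist_triangle (u := s) (v := c) (w := c')
  have := hT.connected.dist_triangle (u := s) (v := c') (w := y)
  have hsc'y : G.dist s c' + G.dist c' y = G.dist s y := by omega
  rcases hy with rfl | hadj
  · exact Or.inr ⟨hsc'y, by omega⟩
  have hyy' : G.dist y y' = 1 := dist_eq_one_iff_adj.2 hadj
  have hy'y : G.dist y' y = 1 := dist_eq_one_iff_adj.2 hadj.symm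
  rcases hT.dist_eq_dist_add_one_of_adj s hadj with hy' | hy'
  · have hsy'y : G.dist s y' + G.dist y' y = G.dist s y := by omega
    by_cases hle : G.dist s c' ≤ G.dist s y'
    · exact Or.inr ⟨hT.dist_add_dist_of_dist_le hsc'y hsy'y hle, by omega⟩
    · rw [show c' = y from hT.connected.dist_eq_zero_iff.1 (by omega)]
      exact Or.inl (Or.inr hadj)
  · exact Or.inr ⟨hT.connected.dist_add_dist_trans hsc'y (by omega), by omega⟩

end Chase

namespace SimpleGraph.IsTree

variable {V : Type*} {G : SimpleGraph V} {k r : ℕ}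

lemma catchIn_of_chasing (hT : G.IsTree) {s : Fin k → V}
    (hcov : ∀ x, ∃ i, G.dist x (s i) ≤ r) (t : ℕ) (c : Fin k → V) (x : V)
    (h : ∀ i, Chasing G (s i) r (t + 1) (c i) (hT.connected.ballProj (s i) r x)) :
    CatchIn G (t + 1) c x := by
  induction t using Nat.strong_induction_on generalizing c x with
  | _ t ih =>
    obtain ⟨j, hj⟩ := hcov x
    have hxj : hT.connected.ballProj (s j) r x = x :=
      Connected.ballProj_eq_self (by rwa [G.dist_comm])
    refine Or.inr ⟨fun i => hT.connected.ballProj (c i) 1 (hT.connected.ballProj (s i) r x),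
      fun i => hT.connected.stepRel_of_dist_le_one (by rw [Connected.dist_ballProj]; omega), ?_⟩
    by_cases hcj : stepRel G (c j) x
    · exact Or.inl ⟨j, by simp only [hxj]; exact Connected.ballProj_eq_self hcj.dist_le_one⟩
    refine Or.inr fun x' hx' => ?_
    cases t with
    | zero =>
      refine absurd ?_ hcj
      rw [← hxj]
      exact (h j).stepRel_of_dist_le hT.connected (by rw [Connected.dist_ballProj]; omega)
    | succ t => exact ih t t.lt_succ_self _ _ fun i => (h i).step hT (hT.stepRel_ballProj hx')

lemma copsWinIn_of_forall_dist_le (hT : G.IsTree) {s : Fin k → V}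
    (hcov : ∀ x, ∃ i, G.dist x (s i) ≤ r) : CopsWinIn G k r := by
  refine ⟨s, fun x => ?_⟩
  cases r with
  | zero =>
    obtain ⟨i, hi⟩ := hcov x
    exact ⟨i, (hT.connected.dist_eq_zero_iff.1 (Nat.le_zero.1 hi)).symm⟩
  | succ t => exact hT.catchIn_of_chasing hcov t s x fun i => Or.inr ⟨by simp, by omega⟩

lemma copsWinIn_of_center (hT : G.IsTree) {S : Finset V} (hS : S.Nonempty) (hk : S.card ≤ k)
    (hcov : ∀ v, ∃ s ∈ S, G.dist v s ≤ r) : CopsWinIn G k r := by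
  obtain ⟨f, hf⟩ := Finset.exists_subset_range_fin hS hk
  refine hT.copsWinIn_of_forall_dist_le (s := f) fun x => ?_
  obtain ⟨s, hs, hxs⟩ := hcov x
  obtain ⟨i, rfl⟩ := hf s hs
  exact ⟨i, hxs⟩

end SimpleGraph.IsTree

section StationaryRobber

variable {V : Type*} {G : SimpleGraph V} {k : ℕ}

lemma CatchIn.exists_dist_le (hG : G.Connected) {t : ℕ} {c : Fin k → V} {x : V}
    (h : CatchIn G t c x) : ∃ i, G.dist (c i) x ≤ t := by
  induction t generalizing c with
  | zero =>
    obtain ⟨i, rfl⟩ := h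
    exact ⟨i, by simp⟩
  | succ t ih =>
    rcases h with ⟨i, rfl⟩ | ⟨c', hstep, hc'⟩
    · exact ⟨i, by simp⟩
    obtain ⟨i, hi⟩ : ∃ i, G.dist (c' i) x ≤ t :=
      hc'.elim (fun ⟨i, hi⟩ => ⟨i, by simp [hi]⟩) fun h => ih (h x (Or.inl rfl))
    have := (hstep i).dist_le_one
    exact ⟨i, (hG.dist_triangle (v := c' i)).trans (by omega)⟩

lemma SimpleGraph.Connected.exists_center_of_copsWinIn (hG : G.Connected) (hk : 1 ≤ k) {t : ℕ}
    (h : CopsWinIn G k t) :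
    ∃ S : Finset V, S.Nonempty ∧ S.card ≤ k ∧ ∀ v, ∃ s ∈ S, G.dist v s ≤ t := by
  classical
  obtain ⟨c, hc⟩ := h
  refine ⟨univ.image c, ⟨c ⟨0, hk⟩, mem_image_of_mem _ (mem_univ _)⟩,
    card_image_le.trans (by simp), fun v => ?_⟩
  obtain ⟨i, hi⟩ := (hc v).exists_dist_le hG
  exact ⟨c i, mem_image_of_mem _ (mem_univ _), by rwa [G.dist_comm]⟩

end StationaryRobber

theorem captTime_tree_eq_radK_general {V : Type*} (T : SimpleGraph V)
    (hT : T.IsTree) (k : ℕ) (hk : 1 ≤ k) :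
    captTime T k = radK T k :=
  congrArg sInf <| Set.ext fun _ =>
    ⟨hT.connected.exists_center_of_copsWinIn hk, fun ⟨_, hS, hSk, hcov⟩ =>
      hT.copsWinIn_of_center hS hSk hcov⟩

/-- For any finite tree `T` and any `k ≥ 1`, the `k`-capture time equals the
metric `k`-center radius. -/
theorem captTime_tree_eq_radK {V : Type*} [Fintype V] (T : SimpleGraph V)
    (hT : T.IsTree) (k : ℕ) (hk : 1 ≤ k) :
    captTime T k = radK T k :=
  captTime_tree_eq_radK_general T hT k hk
end

section
/- Fix constants 0 < α < α' < 1. For all sufficiently large n and every integer k with c(Q_n) ≤ k ≤ e^{n^α}, one has capt_k(Q_n) ≥ ((1 − α')/2) · (n − 1) · ln n. -/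
open SimpleGraph Finset

/-- The hypercube `Q n`: vertices are binary strings of length `n`, adjacent iff they
differ in exactly one coordinate (loops at every vertex are implicit). -/
def hypercube (n : ℕ) : SimpleGraph (Fin n → Bool) :=
  SimpleGraph.fromRel (fun u v => ∃ j, u j ≠ v j ∧ ∀ i, i ≠ j → u i = v i)

/-!
The robber walks at random, flipping a uniformly random coordinate in every round. Against cops
at `cᵢ` consider the potential `∑ᵢ Φ (dist cᵢ r)`, where `Φ` is at least `1` at distance `≤ 1`
and decays like `d ^ (-x / 2)` with `x = n ^ γ`. Its shape makes the robber's averaged move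
multiply the potential by at most `1 + x / n`, whatever the cops do, so capture within `T` rounds
from `(c, r)` forces `1 ≤ (1 + x / n) ^ T ∑ᵢ Φ (dist cᵢ r)`. Summing over the `2 ^ n` starting
vertices of the robber gives `2 ^ n ≤ (1 + x / n) ^ T k ∑_r Φ (dist c r)`. In the last sum the
vertices within distance `n / 8` of a cop are exponentially few and the others have
`Φ ≤ (C x / n) ^ (x / 2)`; as `(1 + x / n) ^ T ≤ e ^ (T x / n)` and `k ≤ e ^ x`, this forces
`T ≳ (1 - γ) / 2 · n log n`.
-/

open Real Filter Asymptotics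

section Game

variable {V : Type*} {G : SimpleGraph V}

theorem not_catchIn_of_fin_zero {t : ℕ} {c : Fin 0 → V} {r : V} : ¬CatchIn G t c r := by
  induction t generalizing c r with
  | zero => rintro ⟨i, -⟩; exact i.elim0
  | succ t ih =>
    rintro (⟨i, -⟩ | ⟨c', -, ⟨i, -⟩ | hnext⟩)
    · exact i.elim0
    · exact i.elim0
    · exact ih (hnext r (Or.inl rfl))

theorem CatchIn.comp_surjective {k m : ℕ} {f : Fin k → Fin m} (hf : f.Surjective) {t : ℕ}
    {c : Fin m → V} {r : V} (h : CatchIn G t c r) : CatchIn G t (c ∘ f) r := by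
  have hcaught : ∀ {r : V} (c : Fin m → V), (∃ i, c i = r) → ∃ i, (c ∘ f) i = r := by
    rintro r c ⟨i, hi⟩
    obtain ⟨i', rfl⟩ := hf i
    exact ⟨i', hi⟩
  induction t generalizing c r with
  | zero => exact hcaught c h
  | succ t ih =>
    rcases h with h | ⟨c', hstep, h | hnext⟩
    · exact Or.inl (hcaught c h)
    · exact Or.inr ⟨c' ∘ f, fun i => hstep (f i), Or.inl (hcaught c' h)⟩
    · exact Or.inr ⟨c' ∘ f, fun i => hstep (f i), Or.inr fun r' hr' => ih (hnext r' hr')⟩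

theorem CopsWinIn.mono {m k t : ℕ} (h : CopsWinIn G m t) (hm : 0 < m) (hmk : m ≤ k) :
    CopsWinIn G k t := by
  obtain ⟨c₀, hc₀⟩ := h
  let f : Fin k → Fin m := fun i => ⟨min i (m - 1), by omega⟩
  have hf : f.Surjective := fun j => ⟨⟨j, j.2.trans_le hmk⟩, Fin.ext (by simp [f]; omega)⟩
  exact ⟨c₀ ∘ f, fun r₀ => (hc₀ r₀).comp_surjective hf⟩

theorem copsWinIn_card [Fintype V] : CopsWinIn G (Fintype.card V) 0 :=
  ⟨(Fintype.equivFin V).symm, fun r₀ => ⟨Fintype.equivFin V r₀, by simp⟩⟩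

theorem copsWinIn_captTime [Fintype V] [Nonempty V] {k : ℕ} (hk : copNumber G ≤ k) :
    CopsWinIn G k (captTime G k) := by
  have hne : {m | ∃ t, CopsWinIn G m t}.Nonempty := ⟨_, 0, copsWinIn_card⟩
  obtain ⟨t, hwin⟩ : ∃ t, CopsWinIn G (copNumber G) t := Nat.sInf_mem hne
  have hpos : 0 < copNumber G := Nat.pos_of_ne_zero fun h0 => by
    obtain ⟨c₀, hc₀⟩ := h0 ▸ hwin
    exact not_catchIn_of_fin_zero (hc₀ (Classical.arbitrary V))
  exact Nat.sInf_mem (s := {t | CopsWinIn G k t}) ⟨t, hwin.mono hpos hk⟩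

end Game

theorem sum_pow_hammingDist {ι R : Type*} [Fintype ι] [DecidableEq ι] [CommSemiring R] (a : R)
    (c : ι → Bool) : ∑ r : ι → Bool, a ^ hammingDist c r = (1 + a) ^ Fintype.card ι := by
  have hprod : ∀ r : ι → Bool, a ^ hammingDist c r = ∏ i, if c i ≠ r i then a else 1 := by
    intro r
    rw [hammingDist, ← Finset.prod_const, Finset.prod_filter]
  have hcoord : ∀ i, ∑ b : Bool, (if c i ≠ b then a else 1) = 1 + a := by
    intro i; cases c i <;> simp [add_comm]
  simp only [hprod]
  rw [← Fintype.prod_sum (fun i b => if c i ≠ b then a else 1)]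
  simp only [hcoord, Finset.prod_const, Finset.card_univ]

theorem Antitone.le_mul_pow_div_pow_add {Φ : ℕ → ℝ} (hΦ : Antitone Φ) (h0 : ∀ d, 0 ≤ Φ d)
    {a : ℝ} (ha0 : 0 < a) (ha1 : a ≤ 1) (m d : ℕ) : Φ d ≤ Φ 0 * (a ^ d / a ^ m) + Φ m := by
  rcases le_total d m with hdm | hmd
  · have hratio : 1 ≤ a ^ d / a ^ m :=
      (one_le_div (pow_pos ha0 m)).2 (pow_le_pow_of_le_one ha0.le ha1 hdm)
    nlinarith [hΦ (Nat.zero_le d), h0 0, h0 m]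
  · have : 0 ≤ Φ 0 * (a ^ d / a ^ m) := by have := h0 0; positivity
    linarith [hΦ hmd]

theorem Antitone.sum_hammingDist_le {ι : Type*} [Fintype ι] [DecidableEq ι] {Φ : ℕ → ℝ}
    (hΦ : Antitone Φ) (h0 : ∀ d, 0 ≤ Φ d) {a : ℝ} (ha0 : 0 < a) (ha1 : a ≤ 1) (c : ι → Bool)
    (m : ℕ) :
    ∑ r : ι → Bool, Φ (hammingDist c r) ≤
      Φ 0 * (1 + a) ^ Fintype.card ι / a ^ m + Φ m * 2 ^ Fintype.card ι :=
  calc ∑ r : ι → Bool, Φ (hammingDist c r)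
      ≤ ∑ r : ι → Bool, (Φ 0 / a ^ m * a ^ hammingDist c r + Φ m) :=
        Finset.sum_le_sum fun r _ =>
          (hΦ.le_mul_pow_div_pow_add h0 ha0 ha1 m (hammingDist c r)).trans_eq (by ring)
    _ = Φ 0 * (1 + a) ^ Fintype.card ι / a ^ m + Φ m * 2 ^ Fintype.card ι := by
      rw [Finset.sum_add_distrib, ← Finset.mul_sum, sum_pow_hammingDist]
      simp; ring

theorem one_add_pow_le_exp {u : ℝ} (hu : -1 ≤ u) (T : ℕ) : (1 + u) ^ T ≤ exp (u * T) := by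
  rw [mul_comm, exp_nat_mul]
  exact pow_le_pow_left₀ (by linarith) (by linarith [add_one_le_exp u]) T

theorem eventually_rpow_mul_two_add_log_le {γ : ℝ} (hγ : γ < 1) :
    ∀ᶠ n : ℕ in atTop, (n : ℝ) ^ γ * (2 + log n) ≤ n / 8 := by
  have hlittle : (fun y : ℝ => 2 + log y) =o[atTop] fun y => y ^ (1 - γ) :=
    (isLittleO_const_left.2 <| Or.inr <|
      tendsto_norm_atTop_atTop.comp (tendsto_rpow_atTop (by linarith))).add
      (isLittleO_log_rpow_atTop (by linarith))
  have hreal : ∀ᶠ y : ℝ in atTop, y ^ γ * (2 + log y) ≤ y / 8 := by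
    filter_upwards [hlittle.bound (by norm_num : (0 : ℝ) < 1 / 8), eventually_gt_atTop 0]
      with y hy hy0
    rw [Real.norm_of_nonneg (by positivity : 0 ≤ y ^ (1 - γ))] at hy
    calc y ^ γ * (2 + log y) ≤ y ^ γ * (1 / 8 * y ^ (1 - γ)) :=
          mul_le_mul_of_nonneg_left ((le_abs_self _).trans hy) (by positivity)
      _ = y / 8 := by
        rw [mul_left_comm, ← rpow_add hy0, add_sub_cancel, rpow_one]; ring
  exact tendsto_natCast_atTop_atTop.eventually hreal

namespace Hypercube

variable {n : ℕ}

def flipCoord (j : Fin n) (r : Fin n → Bool) : Fin n → Bool := Function.update r j (!r j)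

theorem adj_flipCoord (j : Fin n) (r : Fin n → Bool) : (hypercube n).Adj r (flipCoord j r) := by
  have hj : r j ≠ flipCoord j r j := by simp [flipCoord]
  refine (fromRel_adj _ _ _).2 ⟨fun h => hj (congrFun h j), Or.inl ⟨j, hj, fun i hi => ?_⟩⟩
  simp [flipCoord, hi]

theorem hammingDist_le_one_of_stepRel {u v : Fin n → Bool} (h : stepRel (hypercube n) u v) :
    hammingDist u v ≤ 1 := by
  have key : ∀ u v : Fin n → Bool, (∃ j, u j ≠ v j ∧ ∀ i, i ≠ j → u i = v i) →
      hammingDist u v ≤ 1 := by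
    rintro u v ⟨j, -, hj⟩
    refine Finset.card_le_one.2 fun a ha b hb => ?_
    simp only [Finset.mem_filter] at ha hb
    exact (not_imp_comm.1 (hj a) ha.2).trans (not_imp_comm.1 (hj b) hb.2).symm
  rcases h with rfl | h
  · simp
  · rcases ((fromRel_adj _ _ _).1 h).2 with h | h
    · exact key u v h
    · exact hammingDist_comm u v ▸ key v u h

theorem hammingDist_flipCoord (c r : Fin n → Bool) (j : Fin n) :
    hammingDist c (flipCoord j r) =
      if c j = r j then hammingDist c r + 1 else hammingDist c r - 1 := by
  have hfilter : ∀ i, i ≠ j → (c i ≠ flipCoord j r i ↔ c i ≠ r i) := fun i hi => by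
    simp [flipCoord, hi]
  unfold hammingDist
  split_ifs with h
  · rw [← Finset.card_insert_of_notMem (s := {i | c i ≠ r i}) (a := j) (by simp [h])]
    congr 1
    ext i
    by_cases hi : i = j
    · subst hi; rw [Finset.mem_filter]; simp [flipCoord, h]
    · simp [hi, hfilter i hi]
  · rw [← Finset.card_erase_of_mem (s := {i | c i ≠ r i}) (a := j) (by simp [h])]
    congr 1
    ext i
    by_cases hi : i = j
    · subst hi; rw [Finset.mem_filter]; simp [flipCoord, h]
    · simp [hi, hfilter i hi]

theorem sum_hammingDist_flipCoord (f : ℕ → ℝ) (c r : Fin n → Bool) :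
    ∑ j, f (hammingDist c (flipCoord j r)) =
      (n - hammingDist c r) * f (hammingDist c r + 1) +
        hammingDist c r * f (hammingDist c r - 1) := by
  have hsplit : (#{j | c j = r j} : ℝ) + hammingDist c r = n := by
    rw [hammingDist, ← Nat.cast_add, Finset.card_filter_add_card_filter_not]; simp
  simp only [hammingDist_flipCoord, apply_ite f, Finset.sum_ite, Finset.sum_const, nsmul_eq_mul]
  rw [← hammingDist]
  congr 2
  linarith

/-- If the robber, at distance `d ≥ 1` from a cop, flips a uniformly random coordinate, the
expected value of `Φ` at the new distance is the left side of `drift` divided by `n`. -/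
structure IsDriftPotential (n : ℕ) (ρ : ℝ) (Φ : ℕ → ℝ) : Prop where
  nonneg : ∀ d, 0 ≤ Φ d
  antitone : Antitone Φ
  one_le_one : 1 ≤ Φ 1
  one_le_factor : 1 ≤ ρ
  drift : ∀ d : ℕ, 1 ≤ d → d ≤ n → (n - d) * Φ (d + 1) + d * Φ (d - 1) ≤ n * ρ * Φ (d + 1)

namespace IsDriftPotential

variable {ρ : ℝ} {Φ : ℕ → ℝ} {k : ℕ}

theorem one_le_pow_mul_sum_of_near (hΦ : IsDriftPotential n ρ Φ) (t : ℕ)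
    {c : Fin k → Fin n → Bool} {r : Fin n → Bool} (h : ∃ i, hammingDist (c i) r ≤ 1) :
    1 ≤ ρ ^ t * ∑ i, Φ (hammingDist (c i) r) := by
  obtain ⟨i, hi⟩ := h
  calc 1 ≤ Φ (hammingDist (c i) r) := hΦ.one_le_one.trans (hΦ.antitone hi)
    _ ≤ ∑ i, Φ (hammingDist (c i) r) :=
      Finset.single_le_sum (f := fun i => Φ (hammingDist (c i) r))
        (fun i _ => hΦ.nonneg _) (Finset.mem_univ i)
    _ ≤ ρ ^ t * ∑ i, Φ (hammingDist (c i) r) := le_mul_of_one_le_left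
      (Finset.sum_nonneg fun i _ => hΦ.nonneg _) (one_le_pow₀ hΦ.one_le_factor)

theorem sum_flipCoord_le (hΦ : IsDriftPotential n ρ Φ) {u u' r : Fin n → Bool}
    (hstep : stepRel (hypercube n) u u') (hne : u' ≠ r) :
    ∑ j, Φ (hammingDist u' (flipCoord j r)) ≤ n * ρ * Φ (hammingDist u r) := by
  set d := hammingDist u' r
  have hd : 1 ≤ d := Nat.one_le_iff_ne_zero.2 fun h => hne (hammingDist_eq_zero.1 h)
  have hdn : d ≤ n := by simpa using hammingDist_le_card_fintype (x := u') (y := r)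
  have hnear : hammingDist u r ≤ d + 1 :=
    (hammingDist_triangle u u' r).trans (by grind [hammingDist_le_one_of_stepRel hstep])
  rw [sum_hammingDist_flipCoord]
  calc _ ≤ n * ρ * Φ (d + 1) := hΦ.drift d hd hdn
    _ ≤ n * ρ * Φ (hammingDist u r) := by
      have : (0 : ℝ) ≤ n * ρ := by have := hΦ.one_le_factor; positivity
      exact mul_le_mul_of_nonneg_left (hΦ.antitone hnear) this

theorem one_le_pow_succ_mul_sum (hn : 0 < n) (hΦ : IsDriftPotential n ρ Φ) {t : ℕ}
    {c c' : Fin k → Fin n → Bool} {r : Fin n → Bool}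
    (hstep : ∀ i, stepRel (hypercube n) (c i) (c' i)) (hfree : ∀ i, c' i ≠ r)
    (hnext : ∀ j, 1 ≤ ρ ^ t * ∑ i, Φ (hammingDist (c' i) (flipCoord j r))) :
    1 ≤ ρ ^ (t + 1) * ∑ i, Φ (hammingDist (c i) r) := by
  have hρt : 0 ≤ ρ ^ t := pow_nonneg (zero_le_one.trans hΦ.one_le_factor) t
  have hsum : (n : ℝ) * 1 ≤ n * (ρ ^ (t + 1) * ∑ i, Φ (hammingDist (c i) r)) :=
    calc (n : ℝ) * 1 = ∑ _j : Fin n, (1 : ℝ) := by simp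
      _ ≤ ∑ j, ρ ^ t * ∑ i, Φ (hammingDist (c' i) (flipCoord j r)) :=
        Finset.sum_le_sum fun j _ => hnext j
      _ = ρ ^ t * ∑ i, ∑ j, Φ (hammingDist (c' i) (flipCoord j r)) := by
        rw [← Finset.mul_sum, Finset.sum_comm]
      _ ≤ ρ ^ t * ∑ i, n * ρ * Φ (hammingDist (c i) r) := by
        gcongr with i
        exact hΦ.sum_flipCoord_le (hstep i) (hfree i)
      _ = n * (ρ ^ (t + 1) * ∑ i, Φ (hammingDist (c i) r)) := by
        rw [← Finset.mul_sum]; ring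
  exact le_of_mul_le_mul_left hsum (Nat.cast_pos.2 hn)

theorem one_le_pow_mul_sum_of_catchIn (hn : 0 < n) (hΦ : IsDriftPotential n ρ Φ) {t : ℕ}
    {c : Fin k → Fin n → Bool} {r : Fin n → Bool} (h : CatchIn (hypercube n) t c r) :
    1 ≤ ρ ^ t * ∑ i, Φ (hammingDist (c i) r) := by
  induction t generalizing c r with
  | zero => obtain ⟨i, rfl⟩ := h; exact hΦ.one_le_pow_mul_sum_of_near _ ⟨i, by simp⟩
  | succ t ih =>
    rcases h with ⟨i, rfl⟩ | ⟨c', hstep, h | hnext⟩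
    · exact hΦ.one_le_pow_mul_sum_of_near _ ⟨i, by simp⟩
    · obtain ⟨i, rfl⟩ := h
      exact hΦ.one_le_pow_mul_sum_of_near _ ⟨i, hammingDist_le_one_of_stepRel (hstep i)⟩
    · by_cases hcap : ∃ i, c' i = r
      · obtain ⟨i, rfl⟩ := hcap
        exact hΦ.one_le_pow_mul_sum_of_near _ ⟨i, hammingDist_le_one_of_stepRel (hstep i)⟩
      · exact hΦ.one_le_pow_succ_mul_sum hn hstep (not_exists.1 hcap) fun j =>
          ih (hnext _ (Or.inr (adj_flipCoord j r)))

theorem two_pow_le_of_copsWinIn {t : ℕ} (hn : 0 < n)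
    (hΦ : IsDriftPotential n ρ Φ) (h : CopsWinIn (hypercube n) k t) {a : ℝ} (ha0 : 0 < a)
    (ha1 : a ≤ 1) (m : ℕ) :
    (2 : ℝ) ^ n ≤ ρ ^ t * k * (Φ 0 * (1 + a) ^ n / a ^ m + Φ m * 2 ^ n) := by
  obtain ⟨c₀, hc₀⟩ := h
  have hρt : 0 ≤ ρ ^ t := pow_nonneg (zero_le_one.trans hΦ.one_le_factor) t
  calc (2 : ℝ) ^ n = ∑ _r : Fin n → Bool, (1 : ℝ) := by simp
    _ ≤ ∑ r, ρ ^ t * ∑ i, Φ (hammingDist (c₀ i) r) :=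
      Finset.sum_le_sum fun r _ => hΦ.one_le_pow_mul_sum_of_catchIn hn (hc₀ r)
    _ = ρ ^ t * ∑ i, ∑ r, Φ (hammingDist (c₀ i) r) := by
      rw [← Finset.mul_sum, Finset.sum_comm]
    _ ≤ ρ ^ t * ∑ _i : Fin k, (Φ 0 * (1 + a) ^ n / a ^ m + Φ m * 2 ^ n) := by
      gcongr with i
      simpa using hΦ.antitone.sum_hammingDist_le hΦ.nonneg ha0 ha1 (c₀ i) m
    _ = ρ ^ t * k * (Φ 0 * (1 + a) ^ n / a ^ m + Φ m * 2 ^ n) := by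
      rw [Finset.sum_const, Finset.card_univ, Fintype.card_fin, nsmul_eq_mul, mul_assoc]

end IsDriftPotential

/-- Squared, the ratio `potential x (d + 1) / potential x (d - 1)` is
`d (d + 1) / ((d + x) (d + 1 + x)) ≥ (d / (d + x)) ^ 2`: this is the drift condition for
`ρ = 1 + x / n`. -/
noncomputable def potential (x : ℝ) (d : ℕ) : ℝ :=
  √((1 + x) * ∏ j ∈ Finset.range d, ((j + 1) / (j + 1 + x)))

section Potential

variable {x : ℝ}

theorem potential_zero (x : ℝ) : potential x 0 = √(1 + x) := by simp [potential]

theorem potential_one (hx : 0 ≤ x) : potential x 1 = 1 := by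
  simp [potential, add_comm, mul_inv_cancel₀ (by positivity : x + 1 ≠ 0)]

theorem one_add_mul_prod_nonneg (hx : 0 ≤ x) (d : ℕ) :
    0 ≤ (1 + x) * ∏ j ∈ Finset.range d, ((j + 1 : ℝ) / (j + 1 + x)) := by
  have := Finset.prod_nonneg fun (j : ℕ) (_ : j ∈ Finset.range d) =>
    (by positivity : (0 : ℝ) ≤ (j + 1) / (j + 1 + x))
  positivity

theorem antitone_potential (hx : 0 ≤ x) : Antitone (potential x) := by
  refine antitone_nat_of_succ_le fun d => Real.sqrt_le_sqrt ?_
  rw [Finset.prod_range_succ, ← mul_assoc]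
  refine mul_le_of_le_one_right (one_add_mul_prod_nonneg hx d) ?_
  exact (div_le_one (by positivity)).2 (by linarith)

theorem mul_potential_le (hx : 0 ≤ x) (e : ℕ) :
    (e + 1) * potential x e ≤ (e + 1 + x) * potential x (e + 2) := by
  set Q := (1 + x) * ∏ j ∈ Finset.range e, ((j + 1 : ℝ) / (j + 1 + x))
  have hQ : 0 ≤ Q := one_add_mul_prod_nonneg hx e
  have hsucc : potential x (e + 2) =
      √(Q * ((e + 1) / (e + 1 + x) * ((e + 1 + 1) / (e + 1 + 1 + x)))) := by
    simp only [potential, Finset.prod_range_succ, Nat.cast_add, Nat.cast_one, mul_assoc, Q]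
  have hsq : ∀ {a : ℝ} (b : ℝ), 0 ≤ a → a * √b = √(a ^ 2 * b) := fun b ha => by
    rw [Real.sqrt_mul (sq_nonneg _), Real.sqrt_sq ha]
  rw [hsucc, potential, hsq _ (by positivity), hsq _ (by positivity)]
  refine Real.sqrt_le_sqrt ?_
  have hrhs : (e + 1 + x) ^ 2 * (Q * ((e + 1) / (e + 1 + x) * ((e + 1 + 1) / (e + 1 + 1 + x))))
      = (e + 1) ^ 2 * Q * ((e + 1 + x) * (e + 2) / ((e + 1) * (e + 2 + x))) := by
    field_simp
    ring
  rw [hrhs]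
  refine le_mul_of_one_le_right (by positivity) ((one_le_div (by positivity)).2 ?_)
  nlinarith

theorem isDriftPotential_potential {n : ℕ} (hn : 0 < n) (hx : 0 ≤ x) :
    IsDriftPotential n (1 + x / n) (potential x) where
  nonneg _ := Real.sqrt_nonneg _
  antitone := antitone_potential hx
  one_le_one := (potential_one hx).ge
  one_le_factor := le_add_of_nonneg_right (by positivity)
  drift d hd _ := by
    obtain ⟨e, rfl⟩ := Nat.exists_eq_add_of_le' hd
    have := mul_potential_le hx e
    rw [mul_add, mul_one, mul_div_cancel₀ _ (by positivity : (n : ℝ) ≠ 0)]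
    push_cast
    rw [show e + 1 + 1 = e + 2 from rfl]
    linarith

theorem div_add_le_exp_neg_mul_log {b : ℝ} (hb : 0 < b) (hx : 0 ≤ x) :
    b / (b + x) ≤ exp (-(x * (log (b + x + 1) - log (b + x)))) := by
  have hbx : 0 < b + x := by positivity
  have hlog : log (b + x + 1) - log (b + x) ≤ 1 / (b + x) := by
    rw [← log_div (by positivity) hbx.ne']
    exact (log_le_sub_one_of_pos (by positivity)).trans_eq (by field_simp; ring)
  calc b / (b + x) = 1 - x / (b + x) := by field_simp; ring
    _ ≤ exp (-(x / (b + x))) := one_sub_le_exp_neg _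
    _ ≤ exp (-(x * (log (b + x + 1) - log (b + x)))) := by
      gcongr
      simpa [div_eq_mul_one_div x] using mul_le_mul_of_nonneg_left hlog hx

theorem potential_le_exp (hx : 0 ≤ x) (m : ℕ) :
    potential x m ≤ exp ((log (1 + x) - x * (log (m + 1 + x) - log (1 + x))) / 2) := by
  have hprod : ∏ j ∈ Finset.range m, ((j + 1 : ℝ) / (j + 1 + x)) ≤
      exp (-(x * (log (m + 1 + x) - log (1 + x)))) := by
    have htel := Finset.sum_range_sub (fun j : ℕ => log (j + 1 + x)) m
    push_cast at htel
    rw [zero_add] at htel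
    rw [← htel, Finset.mul_sum, ← Finset.sum_neg_distrib, exp_sum]
    refine Finset.prod_le_prod (fun j _ => by positivity) fun j _ => ?_
    rw [show (j : ℝ) + 1 + 1 + x = j + 1 + x + 1 by ring]
    exact div_add_le_exp_neg_mul_log (by positivity) hx
  rw [exp_half, potential, sub_eq_add_neg, exp_add, exp_log (by positivity)]
  exact Real.sqrt_le_sqrt (mul_le_mul_of_nonneg_left hprod (by positivity))

end Potential

theorem exp_mul_potential_zero_lt {n : ℕ} {x β : ℝ} (hx : 0 ≤ x) (hβ : β ≤ 1)
    (hsmall : x * (2 + log n) ≤ n / 8) (hn : 4 ≤ n) :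
    exp (x + β / 2 * x * log n) * (potential x 0 * (1 + 1 / 7) ^ n / (1 / 7) ^ (n / 8)) <
      2 ^ n / 2 := by
  have hL : 0 ≤ x * log n := mul_nonneg hx (log_natCast_nonneg n)
  have hm : ((n / 8 : ℕ) : ℝ) ≤ n / 8 := Nat.cast_div_le
  have hpot : potential x 0 ≤ exp x := by
    rw [potential_zero]
    calc √(1 + x) ≤ 1 + x := (Real.sqrt_le_left (by linarith)).2 (by nlinarith)
      _ ≤ exp x := by linarith [add_one_le_exp x]
  have hseven : (7 : ℝ) ≤ exp 2 := by
    have := exp_one_gt_d9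
    rw [show (2 : ℝ) = 1 + 1 by norm_num, exp_add]
    nlinarith
  have hpow7 : 1 / (1 / 7 : ℝ) ^ (n / 8) ≤ exp (2 * (n / 8 : ℕ)) := by
    rw [one_div_pow, one_div_one_div, mul_comm, exp_nat_mul]
    exact pow_le_pow_left₀ (by norm_num) hseven _
  have hpow2 : (2 : ℝ) ^ n / 2 = exp (n * log 2 - log 2) := by
    rw [exp_sub, exp_nat_mul, exp_log two_pos]
  have hlog2 := log_two_gt_d9
  have hlog2' := log_two_lt_d9
  calc exp (x + β / 2 * x * log n) * (potential x 0 * (1 + 1 / 7) ^ n / (1 / 7) ^ (n / 8))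
      = exp (x + β / 2 * x * log n) * potential x 0 * (1 + 1 / 7) ^ n *
          (1 / (1 / 7) ^ (n / 8)) := by ring
    _ ≤ exp (x + β / 2 * x * log n) * exp x * exp (1 / 7 * n) * exp (2 * (n / 8 : ℕ)) := by
      gcongr
      exact one_add_pow_le_exp (by norm_num) n
    _ = exp (x + β / 2 * x * log n + x + 1 / 7 * n + 2 * (n / 8 : ℕ)) := by
      simp only [exp_add]
    _ < 2 ^ n / 2 := by
      have hβL : β / 2 * x * log n ≤ x * log n / 2 := by nlinarith
      have hn4 : (4 : ℝ) ≤ n := by exact_mod_cast hn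
      have hnlog2 : n * 0.6931471803 < n * log 2 := by gcongr
      rw [hpow2, exp_lt_exp]
      linarith

theorem exp_mul_potential_lt {n m : ℕ} {γ β : ℝ} (hγ : 0 ≤ γ) (hn : 1 ≤ n)
    (hlog : 8 ≤ (1 - γ - β) * log n) (hm : (n : ℝ) / 8 ≤ m + 1) :
    exp ((n : ℝ) ^ γ + β / 2 * (n : ℝ) ^ γ * log n) * potential ((n : ℝ) ^ γ) m < 1 / 2 := by
  set x := (n : ℝ) ^ γ
  have hn0 : (0 : ℝ) < n := by exact_mod_cast hn
  have hx : 1 ≤ x := one_le_rpow (by exact_mod_cast hn) hγ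
  have hlog1x : log (1 + x) ≤ x := by linarith [log_le_sub_one_of_pos (by linarith : 0 < 1 + x)]
  have hlog1x' : log (1 + x) ≤ log 2 + γ * log n := by
    rw [← log_rpow hn0, ← log_mul two_ne_zero (by positivity)]
    exact log_le_log (by positivity) (by linarith)
  have hlogm : log n - 3 * log 2 ≤ log (m + 1 + x) := by
    rw [← log_rpow two_pos, ← log_div hn0.ne' (by positivity)]
    exact log_le_log (by positivity) (by norm_num; linarith)
  have hdecay : x * (log n - 3 * log 2 - (log 2 + γ * log n)) ≤
      x * (log (m + 1 + x) - log (1 + x)) :=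
    mul_le_mul_of_nonneg_left (by linarith) (by linarith)
  have hgain : x * 8 ≤ x * ((1 - γ - β) * log n) := mul_le_mul_of_nonneg_left hlog (by linarith)
  have hlog2 := log_two_lt_d9
  calc exp (x + β / 2 * x * log n) * potential x m
      ≤ exp (x + β / 2 * x * log n) *
          exp ((log (1 + x) - x * (log (m + 1 + x) - log (1 + x))) / 2) := by
        gcongr
        exact potential_le_exp (by linarith) m
    _ = exp (x + β / 2 * x * log n +
          (log (1 + x) - x * (log (m + 1 + x) - log (1 + x))) / 2) := (exp_add _ _).symm
    _ < exp (-log 2) := by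
      have hxlog2 : x * log 2 ≤ x * 0.6931471808 := by gcongr
      rw [exp_lt_exp]
      linarith
    _ = 1 / 2 := by rw [exp_neg, exp_log two_pos, one_div]

theorem one_add_div_pow_mul_le_exp {n T k : ℕ} {x β : ℝ} (hn : (0 : ℝ) < n) (hx : 0 ≤ x)
    (hβ : 0 ≤ β) (hT : (T : ℝ) ≤ β / 2 * (n - 1) * log n) (hk : (k : ℝ) ≤ exp x) :
    (1 + x / n) ^ T * k ≤ exp (x + β / 2 * x * log n) := by
  have hTx : x / n * T ≤ β / 2 * x * log n :=
    calc x / n * T ≤ x / n * (β / 2 * (n - 1) * log n) := by gcongr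
      _ ≤ β / 2 * x * log n := by
        rw [div_mul_eq_mul_div, div_le_iff₀ hn]
        nlinarith [mul_nonneg (mul_nonneg hβ hx) (log_natCast_nonneg n)]
  have : 0 ≤ x / n := by positivity
  rw [add_comm x, exp_add]
  exact mul_le_mul ((one_add_pow_le_exp (by linarith) T).trans (exp_le_exp.2 hTx)) hk
    (by positivity) (by positivity)

theorem le_captTime {n k : ℕ} {γ β : ℝ} (hk : copNumber (hypercube n) ≤ k)
    (hkγ : (k : ℝ) ≤ exp ((n : ℝ) ^ γ)) (hγ : 0 ≤ γ) (hβ0 : 0 ≤ β) (hβ1 : β ≤ 1)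
    (hsmall : (n : ℝ) ^ γ * (2 + log n) ≤ n / 8) (hlog : 8 ≤ (1 - γ - β) * log n) :
    β / 2 * (n - 1) * log n ≤ captTime (hypercube n) k := by
  have hn : 1 ≤ n := by
    by_contra! h
    interval_cases n
    norm_num at hlog
  set x := (n : ℝ) ^ γ
  set T := captTime (hypercube n) k
  have hn0 : (0 : ℝ) < n := by exact_mod_cast hn
  have hx : 1 ≤ x := one_le_rpow (by exact_mod_cast hn) hγ
  have hL : 0 ≤ log n := log_natCast_nonneg n
  have hn4 : 4 ≤ n := by
    have : (16 : ℝ) ≤ n := by nlinarith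
    exact_mod_cast (by linarith : (4 : ℝ) ≤ n)
  by_contra! hT
  have hgrowth := one_add_div_pow_mul_le_exp hn0 (by linarith) hβ0 hT.le hkγ
  have hΦ := isDriftPotential_potential hn (by linarith : 0 ≤ x)
  -- weights `7 ^ (n / 8 - d)` on the vertices at distance `d ≤ n / 8` from a cop
  have hcover := hΦ.two_pow_le_of_copsWinIn hn (copsWinIn_captTime hk)
    (by norm_num : (0 : ℝ) < 1 / 7) (by norm_num) (n / 8)
  have hnear := exp_mul_potential_zero_lt (by linarith) hβ1 hsmall hn4
  have hfar := exp_mul_potential_lt (m := n / 8) hγ hn hlog (by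
    have := Nat.lt_div_mul_add (a := n) (show 0 < 8 by norm_num)
    have : (n : ℝ) < (n / 8 : ℕ) * 8 + 8 := by exact_mod_cast this
    linarith)
  have : (2 : ℝ) ^ n < 2 ^ n := calc
    (2 : ℝ) ^ n ≤ (1 + x / n) ^ T * k *
        (potential x 0 * (1 + 1 / 7) ^ n / (1 / 7) ^ (n / 8) + potential x (n / 8) * 2 ^ n) :=
      hcover
    _ ≤ exp (x + β / 2 * x * log n) *
        (potential x 0 * (1 + 1 / 7) ^ n / (1 / 7) ^ (n / 8) + potential x (n / 8) * 2 ^ n) := by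
      have := hΦ.nonneg 0
      have := hΦ.nonneg (n / 8)
      gcongr
    _ < 2 ^ n / 2 + 1 / 2 * 2 ^ n := by
      rw [mul_add, ← mul_assoc]
      gcongr
    _ = 2 ^ n := by ring
  exact lt_irrefl _ this

end Hypercube

/-- Lower bound on the capture time of hypercubes with few cops: for constants
`0 < α < α' < 1`, for all large `n` and all `c(Q_n) ≤ k ≤ e^{n^α}`,
`capt_k(Q_n) ≥ ((1 - α')/2) (n - 1) ln n`. -/
theorem captTime_hypercube_lower_small (α α' : ℝ) (h0 : 0 < α) (h1 : α < α') (h2 : α' < 1) :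
    ∃ N : ℕ, ∀ n : ℕ, N ≤ n → ∀ k : ℕ,
      copNumber (hypercube n) ≤ k → (k : ℝ) ≤ Real.exp ((n : ℝ) ^ α) →
      (1 - α') / 2 * ((n : ℝ) - 1) * Real.log n ≤ (captTime (hypercube n) k : ℝ) := by
  obtain ⟨N, hN⟩ := eventually_atTop.1 <|
    (eventually_rpow_mul_two_add_log_le (γ := (α + α') / 2) (by linarith)).and <|
      ((tendsto_log_atTop.comp tendsto_natCast_atTop_atTop).eventually_ge_atTop
        (16 / (α' - α))).and (eventually_ge_atTop 1)
  refine ⟨N, fun n hn k hk hkα => ?_⟩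
  obtain ⟨hsmall, hlog, hn1⟩ := hN n hn
  have hαγ : (n : ℝ) ^ α ≤ (n : ℝ) ^ ((α + α') / 2) :=
    rpow_le_rpow_of_exponent_le (by exact_mod_cast hn1) (by linarith)
  refine Hypercube.le_captTime hk (hkα.trans (exp_le_exp.2 hαγ)) (by linarith) (by linarith)
    (by linarith) hsmall ?_
  have := (div_le_iff₀ (by linarith : 0 < α' - α)).1 hlog
  simp only [Function.comp_apply] at this
  linarith
end

section
/- Let n ∈ ℕ, fix v ∈ {0,1}^n, and let i be an integer with 0 ≤ i and 2i < n. Write N_j(v) for the set of binary strings at Hamming distance exactly j from v. Then for every subset S ⊆ N_i(v), the set of vertices of N_{i+1}(v) adjacent in Q_n to some vertex of S has size at least ((n−i)/(i+1))·|S| ≥ |S|; consequently there exists a matching in Q_n between N_i(v) and N_{i+1}(v) saturating N_i(v), i.e. an injection M : N_i(v) → N_{i+1}(v) such that w and M(w) are adjacent for every w ∈ N_i(v). -/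
open SimpleGraph Finset

open scoped Classical

namespace HCaux

variable {n : ℕ}

noncomputable def flip (j : Fin n) (w : Fin n → Bool) : Fin n → Bool :=
  Function.update w j (! w j)

lemma flip_self (j : Fin n) (w : Fin n → Bool) : flip j w j = ! w j :=
  Function.update_self _ _ _

lemma flip_ne {j k : Fin n} (h : k ≠ j) (w : Fin n → Bool) : flip j w k = w k :=
  Function.update_of_ne h _ _

lemma adj_flip (j : Fin n) (w : Fin n → Bool) : (hypercube n).Adj w (flip j w) := by
  rw [hypercube, fromRel_adj]
  constructor
  · intro h
    have := congrFun h j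
    rw [flip_self] at this
    simp at this
  · left
    exact ⟨j, by simp [flip_self], fun i hi => (flip_ne hi w).symm⟩

lemma adj_exists {w u : Fin n → Bool} (h : (hypercube n).Adj w u) :
    ∃ j, u = flip j w := by
  rw [hypercube, fromRel_adj] at h
  obtain ⟨hne, h | h⟩ := h
  · obtain ⟨j, hj, hall⟩ := h
    refine ⟨j, funext fun k => ?_⟩
    by_cases hk : k = j
    · subst hk
      rw [flip_self]
      revert hj; cases w k <;> cases u k <;> simp
    · rw [flip_ne hk, hall k hk]
  · obtain ⟨j, hj, hall⟩ := h
    refine ⟨j, funext fun k => ?_⟩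
    by_cases hk : k = j
    · subst hk
      rw [flip_self]
      revert hj; cases w k <;> cases u k <;> simp
    · rw [flip_ne hk, (hall k hk).symm]

lemma flip_injOn (w : Fin n → Bool) : Set.InjOn (fun j => flip j w) Set.univ := by
  intro j _ j' _ h
  by_contra hne
  have h2 := congrFun h j
  simp only at h2
  rw [flip_self, flip_ne hne] at h2
  simp at h2

/-- the difference set -/
noncomputable def D (v w : Fin n → Bool) : Finset (Fin n) :=
  Finset.univ.filter (fun k => v k ≠ w k)

lemma hammingDist_eq_card (v w : Fin n → Bool) : hammingDist v w = (D v w).card := rfl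

lemma D_flip_eq (v w : Fin n → Bool) {j : Fin n} (h : v j = w j) :
    D v (flip j w) = insert j (D v w) := by
  ext k
  by_cases hk : k = j
  · subst hk
    have hne : v k ≠ flip k w k := by rw [flip_self, h]; cases w k <;> simp
    simp [D, hne]
  · simp [D, flip_ne hk, hk]

lemma D_flip_ne (v w : Fin n → Bool) {j : Fin n} (h : v j ≠ w j) :
    D v (flip j w) = (D v w).erase j := by
  ext k
  by_cases hk : k = j
  · subst hk
    simp [D, flip_self]
    revert h; cases w k <;> cases v k <;> simp
  · simp [D, flip_ne hk, hk]

lemma dist_flip_eq (v w : Fin n → Bool) {j : Fin n} (h : v j = w j) :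
    hammingDist v (flip j w) = hammingDist v w + 1 := by
  rw [hammingDist_eq_card, hammingDist_eq_card, D_flip_eq v w h,
    Finset.card_insert_of_notMem (by simp [D, h])]

lemma dist_flip_ne (v w : Fin n → Bool) {j : Fin n} (h : v j ≠ w j) :
    hammingDist v (flip j w) + 1 = hammingDist v w := by
  rw [hammingDist_eq_card, hammingDist_eq_card, D_flip_ne v w h,
    Finset.card_erase_add_one (by simp [D, h])]

end HCaux

/-- Let `0 ≤ i` with `2i < n` and fix `v ∈ {0,1}^n`. Every `S ⊆ N_i(v)` has at least
`((n-i)/(i+1))|S| ≥ |S|` neighbours in `N_{i+1}(v)`; consequently there is a matching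
between `N_i(v)` and `N_{i+1}(v)` saturating `N_i(v)`. -/


theorem hypercube_layer_matching (n i : ℕ) (hi : 2 * i < n) (v : Fin n → Bool) :
    (∀ S : Finset (Fin n → Bool), (∀ w ∈ S, hammingDist v w = i) →
      ((n - i : ℕ) : ℝ) / ((i : ℝ) + 1) * S.card ≤
        ((Finset.univ.filter (fun u : Fin n → Bool =>
          hammingDist v u = i + 1 ∧ ∃ w ∈ S, (hypercube n).Adj w u)).card : ℝ) ∧
      S.card ≤ (Finset.univ.filter (fun u : Fin n → Bool =>
          hammingDist v u = i + 1 ∧ ∃ w ∈ S, (hypercube n).Adj w u)).card) ∧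
    ∃ M : (Fin n → Bool) → (Fin n → Bool),
      Set.InjOn M {w | hammingDist v w = i} ∧
      ∀ w : Fin n → Bool, hammingDist v w = i →
        hammingDist v (M w) = i + 1 ∧ (hypercube n).Adj w (M w) := by
  classical
  have hnii : i + 1 ≤ n - i := by omega
  have hA : ∀ w : Fin n → Bool, hammingDist v w = i →
      (Finset.univ.filter (fun u => hammingDist v u = i + 1 ∧ (hypercube n).Adj w u))
        = (Finset.univ.filter (fun j => v j = w j)).image (fun j => HCaux.flip j w) := by
    intro w hw
    ext u
    simp only [mem_filter, mem_univ, true_and, mem_image]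
    constructor
    · rintro ⟨hu, hadj⟩
      obtain ⟨j, rfl⟩ := HCaux.adj_exists hadj
      refine ⟨j, ?_, rfl⟩
      by_contra hne
      have := HCaux.dist_flip_ne v w hne
      omega
    · rintro ⟨j, hj, rfl⟩
      exact ⟨by rw [HCaux.dist_flip_eq v w hj, hw], HCaux.adj_flip j w⟩
  have hAcard : ∀ w : Fin n → Bool, hammingDist v w = i →
      (Finset.univ.filter (fun u => hammingDist v u = i + 1 ∧ (hypercube n).Adj w u)).card
        = n - i := by
    intro w hw
    rw [hA w hw, Finset.card_image_of_injOn
      (fun a _ b _ h => HCaux.flip_injOn w trivial trivial h)]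
    have h1 : (Finset.univ.filter (fun j => v j ≠ w j)).card = i := hw
    have h2 := Finset.card_filter_add_card_filter_not
      (s := (Finset.univ : Finset (Fin n))) (p := fun j => v j = w j)
    have h3 : (Finset.univ.filter (fun j => ¬ v j = w j)).card = i := h1
    have h4 : (Finset.univ : Finset (Fin n)).card = n := by simp
    omega
  have key : ∀ S : Finset (Fin n → Bool), (∀ w ∈ S, hammingDist v w = i) →
      (n - i) * S.card ≤ (i + 1) *
        (Finset.univ.filter (fun u => hammingDist v u = i + 1 ∧
          ∃ w ∈ S, (hypercube n).Adj w u)).card := by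
    intro S hS
    set T := Finset.univ.filter (fun u => hammingDist v u = i + 1 ∧
      ∃ w ∈ S, (hypercube n).Adj w u) with hT
    have hcount : ∑ w ∈ S, (T.filter (fun u => (hypercube n).Adj w u)).card
        = ∑ u ∈ T, (S.filter (fun w => (hypercube n).Adj w u)).card := by
      simp only [Finset.card_filter]
      exact Finset.sum_comm
    have hleft : ∀ w ∈ S, (T.filter (fun u => (hypercube n).Adj w u)).card = n - i := by
      intro w hw
      have heq : T.filter (fun u => (hypercube n).Adj w u)
          = Finset.univ.filter (fun u => hammingDist v u = i + 1 ∧ (hypercube n).Adj w u) := by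
        ext u
        simp only [hT, Finset.filter_filter, mem_filter, mem_univ, true_and]
        constructor
        · tauto
        · rintro ⟨h1, h2⟩; exact ⟨⟨h1, w, hw, h2⟩, h2⟩
      rw [heq, hAcard w (hS w hw)]
    have hright : ∀ u ∈ T, (S.filter (fun w => (hypercube n).Adj w u)).card ≤ i + 1 := by
      intro u hu
      have hu' : hammingDist v u = i + 1 := (Finset.mem_filter.mp hu).2.1
      have hsub : S.filter (fun w => (hypercube n).Adj w u)
          ⊆ (Finset.univ.filter (fun j => v j ≠ u j)).image (fun j => HCaux.flip j u) := by
        intro w hw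
        obtain ⟨hwS, hadj⟩ := Finset.mem_filter.mp hw
        obtain ⟨j, rfl⟩ := HCaux.adj_exists hadj.symm
        refine Finset.mem_image.mpr ⟨j, ?_, rfl⟩
        simp only [mem_filter, mem_univ, true_and]
        intro hj
        have hd := HCaux.dist_flip_eq v u hj
        have := hS _ hwS
        omega
      calc (S.filter (fun w => (hypercube n).Adj w u)).card
          ≤ ((Finset.univ.filter (fun j => v j ≠ u j)).image (fun j => HCaux.flip j u)).card :=
            Finset.card_le_card hsub
        _ ≤ (Finset.univ.filter (fun j => v j ≠ u j)).card := Finset.card_image_le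
        _ = i + 1 := hu'
    calc (n - i) * S.card = ∑ _w ∈ S, (n - i) := by
          rw [Finset.sum_const, smul_eq_mul, mul_comm]
      _ = ∑ w ∈ S, (T.filter (fun u => (hypercube n).Adj w u)).card :=
          (Finset.sum_congr rfl hleft).symm
      _ = ∑ u ∈ T, (S.filter (fun w => (hypercube n).Adj w u)).card := hcount
      _ ≤ ∑ _u ∈ T, (i + 1) := Finset.sum_le_sum hright
      _ = (i + 1) * T.card := by rw [Finset.sum_const, smul_eq_mul, mul_comm]
  have hcard : ∀ S : Finset (Fin n → Bool), (∀ w ∈ S, hammingDist v w = i) →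
      S.card ≤ (Finset.univ.filter (fun u => hammingDist v u = i + 1 ∧
        ∃ w ∈ S, (hypercube n).Adj w u)).card := by
    intro S hS
    have hk := key S hS
    have h2 : (i + 1) * S.card ≤ (i + 1) * (Finset.univ.filter (fun u =>
        hammingDist v u = i + 1 ∧ ∃ w ∈ S, (hypercube n).Adj w u)).card :=
      le_trans (Nat.mul_le_mul_right _ hnii) hk
    exact Nat.le_of_mul_le_mul_left h2 (by omega)
  constructor
  · intro S hS
    refine ⟨?_, hcard S hS⟩
    rw [div_mul_eq_mul_div, div_le_iff₀ (by positivity)]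
    have hk := key S hS
    have : ((n - i : ℕ) : ℝ) * S.card ≤ ((i : ℝ) + 1) *
        (Finset.univ.filter (fun u => hammingDist v u = i + 1 ∧
          ∃ w ∈ S, (hypercube n).Adj w u)).card := by exact_mod_cast hk
    linarith
  · have hall : ∀ s : Finset {w : Fin n → Bool // hammingDist v w = i},
        s.card ≤ (s.biUnion (fun w => Finset.univ.filter (fun u =>
          hammingDist v u = i + 1 ∧ (hypercube n).Adj w.1 u))).card := by
      intro s
      set S := s.image Subtype.val with hS
      have hSd : ∀ w ∈ S, hammingDist v w = i := by
        intro w hw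
        obtain ⟨w', _, rfl⟩ := Finset.mem_image.mp hw
        exact w'.2
      have hb : s.biUnion (fun w => Finset.univ.filter (fun u =>
          hammingDist v u = i + 1 ∧ (hypercube n).Adj w.1 u))
          = Finset.univ.filter (fun u => hammingDist v u = i + 1 ∧
            ∃ w ∈ S, (hypercube n).Adj w u) := by
        ext u
        simp only [Finset.mem_biUnion, mem_filter, mem_univ, true_and, hS,
          Finset.mem_image]
        constructor
        · rintro ⟨w, hws, hd, hadj⟩
          exact ⟨hd, w.1, ⟨w, hws, rfl⟩, hadj⟩
        · rintro ⟨hd, w, ⟨w', hw's, rfl⟩, hadj⟩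
          exact ⟨w', hw's, hd, hadj⟩
      rw [hb, show s.card = S.card from
        (Finset.card_image_of_injective s Subtype.val_injective).symm]
      exact hcard S hSd
    obtain ⟨f, hfinj, hfmem⟩ := (Finset.all_card_le_biUnion_card_iff_exists_injective
        (fun w : {w : Fin n → Bool // hammingDist v w = i} =>
          Finset.univ.filter (fun u => hammingDist v u = i + 1 ∧
            (hypercube n).Adj w.1 u))).mp hall
    refine ⟨fun w => if h : hammingDist v w = i then f ⟨w, h⟩ else w, ?_, ?_⟩
    · intro w1 h1 w2 h2 heq
      simp only [Set.mem_setOf_eq] at h1 h2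
      simp only at heq
      rw [dif_pos h1, dif_pos h2] at heq
      exact congrArg Subtype.val (hfinj heq)
    · intro w hw
      have hm := hfmem ⟨w, hw⟩
      simp only [mem_filter, mem_univ, true_and] at hm
      simpa only [dif_pos hw] using hm
end

section
/- Let g(x) = 2x·log_2(2x) + (1−2x)·log_2(1−2x) − x·log_2 x − (1−x)·log_2(1−x), let c = 1/2 − √2/4, and let b = −g(c). Fix a constant ε > 0. There exist constants C_1, C_2 > 0 and N such that for all n ≥ N and all integers k with 2^{n(1−b+ε)} < k ≤ 2^{n(1−ε)}, one has C_1 · n ≤ capt_k(Q_n) ≤ C_2 · n. -/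
open SimpleGraph Finset

/-- The function `g` from the summary of hypercube results. -/
noncomputable def gfun (x : ℝ) : ℝ :=
  2 * x * Real.logb 2 (2 * x) + (1 - 2 * x) * Real.logb 2 (1 - 2 * x)
    - x * Real.logb 2 x - (1 - x) * Real.logb 2 (1 - x)

/-- The constant `c = 1/2 - √2/4`. -/
noncomputable def cconst : ℝ := 1 / 2 - Real.sqrt 2 / 4

/-- The constant `b = -g(c)`. -/
noncomputable def bconst : ℝ := -gfun cconst

/-!
Lower bound: against a robber who never moves, `k` cops catching her within `t` rounds must
start so that the Hamming balls of radius `t` around them cover `Q_n`. Hence, with `H` the binary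
entropy in nats, `2^n ≤ k · ∑_{s ≤ t} C(n, s) ≤ k · exp (n H(t / n))`, and `k ≤ 2^{n(1-ε)}` forces
`H(t / n) ≥ ε log 2`, i.e. `t ≥ δ n` for a fixed `δ > 0`.

Upper bound: split the coordinates into two halves `S` and `Sᶜ`. One team of cops agrees with an
anchor on `S` and realises every pattern on `Sᶜ`, the other team likewise with the roles of `S`
and `Sᶜ` exchanged; as soon as one anchor matches the robber on its half, some cop stands on her.
Each round both anchors move one coordinate towards the robber, while her move spoils at most one
coordinate of one half, so the total mismatch drops every round and capture happens within `n`
rounds. This needs `2^{n/2 + 2}` cops, which `k > 2^{n(1-b+ε)}` provides because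
`b = (H(2c) - H(c)) / log 2 ≤ 1 - H(1/8) / log 2 ≤ 1/2`.
-/

open Real Function Topology

lemma captTime_le {V : Type*} {G : SimpleGraph V} {k t : ℕ} (h : CopsWinIn G k t) :
    captTime G k ≤ t :=
  Nat.sInf_le h

lemma copsWinIn_captTime_s18 {V : Type*} {G : SimpleGraph V} {k t : ℕ} (h : CopsWinIn G k t) :
    CopsWinIn G k (captTime G k) :=
  Nat.sInf_mem (s := {t | CopsWinIn G k t}) ⟨t, h⟩

section HammingDistOn

variable {ι β : Type*} [DecidableEq β]

def hammingDistOn (s : Finset ι) (x y : ι → β) : ℕ := #{i ∈ s | x i ≠ y i}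

lemma hammingDistOn_le_card (s : Finset ι) (x y : ι → β) : hammingDistOn s x y ≤ #s :=
  card_filter_le _ _

lemma hammingDistOn_eq_zero {s : Finset ι} {x y : ι → β} :
    hammingDistOn s x y = 0 ↔ ∀ i ∈ s, x i = y i := by
  simp [hammingDistOn, filter_eq_empty_iff]

lemma hammingDistOn_triangle [DecidableEq ι] (s : Finset ι) (x y z : ι → β) :
    hammingDistOn s x z ≤ hammingDistOn s x y + hammingDistOn s y z := by
  refine (card_le_card fun i hi => ?_).trans (card_union_le _ _)
  simp only [mem_filter, mem_union] at hi ⊢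
  by_cases h : x i = y i
  · exact .inr ⟨hi.1, h ▸ hi.2⟩
  · exact .inl ⟨hi.1, h⟩

lemma hammingDistOn_add_le_hammingDist [Fintype ι] [DecidableEq ι] {s t : Finset ι}
    (hst : Disjoint s t) (x y : ι → β) : hammingDistOn s x y + hammingDistOn t x y ≤ hammingDist x y := by
  rw [hammingDistOn, hammingDistOn, ← card_union_of_disjoint (disjoint_filter_filter hst),
    ← filter_union]
  exact card_le_card (filter_subset_filter _ (subset_univ _))

lemma hammingDistOn_update_add_one [DecidableEq ι] {s : Finset ι} {x y : ι → β} {i : ι}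
    (hi : i ∈ s) (hxy : x i ≠ y i) :
    hammingDistOn s (update x i (y i)) y + 1 = hammingDistOn s x y := by
  have : {j ∈ s | update x i (y i) j ≠ y j} = {j ∈ s | x j ≠ y j}.erase i := by
    ext j
    by_cases hj : j = i <;> simp [hj]
  rw [hammingDistOn, hammingDistOn, this, card_erase_add_one (mem_filter.2 ⟨hi, hxy⟩)]

end HammingDistOn

lemma hammingDist_le_one_of_forall_ne {ι β : Type*} [Fintype ι] [DecidableEq β] {x y : ι → β}
    {j : ι} (h : ∀ i ≠ j, x i = y i) : hammingDist x y ≤ 1 :=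
  (card_le_card fun i hi => mem_singleton.2 (not_imp_comm.1 (h i) (mem_filter.1 hi).2)).trans
    (card_singleton j).le

lemma stepRel_hypercube_iff {n : ℕ} {x y : Fin n → Bool} :
    stepRel (hypercube n) x y ↔ hammingDist x y ≤ 1 := by
  rw [stepRel, hypercube, fromRel_adj]
  constructor
  · rintro (rfl | ⟨-, ⟨j, -, hj⟩ | ⟨j, -, hj⟩⟩)
    · simp
    · exact hammingDist_le_one_of_forall_ne hj
    · exact hammingDist_le_one_of_forall_ne fun i hi => (hj i hi).symm
  · intro h
    rcases Nat.le_one_iff_eq_zero_or_eq_one.1 h with h | h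
    · exact .inl (hammingDist_eq_zero.1 h)
    obtain ⟨j, hj⟩ := card_eq_one.1 h
    have hmem : ∀ i, x i ≠ y i ↔ i = j := fun i => by
      simpa using congrArg (i ∈ ·) hj
    refine .inr ⟨hammingDist_ne_zero.1 (by omega), .inl ⟨j, (hmem j).2 rfl, fun i hi => ?_⟩⟩
    exact not_not.1 fun hne => hi ((hmem i).1 hne)

section Fill

variable {ι β : Type*} [DecidableEq ι]

def fill (s : Finset ι) (a : ι → β) (u : {i // i ∉ s} → β) : ι → β :=
  fun i => if h : i ∈ s then a i else u ⟨i, h⟩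

lemma fill_eq_of_eqOn {s : Finset ι} {a r : ι → β} (h : ∀ i ∈ s, a i = r i) :
    fill s a (fun i => r i) = r := by
  funext i
  by_cases hi : i ∈ s <;> simp [fill, hi, h]

lemma hammingDist_fill_le [Fintype ι] [DecidableEq β] (s : Finset ι) (a b : ι → β)
    (u : {i // i ∉ s} → β) : hammingDist (fill s a u) (fill s b u) ≤ hammingDist a b := by
  refine card_le_card fun i => ?_
  simp only [mem_filter, mem_univ, true_and]
  unfold fill
  split_ifs
  exacts [id, fun h => absurd rfl h]

end Fill

section Strategy

variable {n k : ℕ}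

def formation (s t : Finset (Fin n)) (a b : Fin n → Bool) :
    ({i // i ∉ s} → Bool) ⊕ ({i // i ∉ t} → Bool) → Fin n → Bool :=
  Sum.elim (fill s a) (fill t b)

lemma stepRel_formation_update (s t : Finset (Fin n)) (a b : Fin n → Bool) (i j : Fin n)
    (v w : Bool) (c) :
    stepRel (hypercube n) (formation s t a b c)
      (formation s t (update a i v) (update b j w) c) := by
  have ha : hammingDist a (update a i v) ≤ 1 :=
    hammingDist_le_one_of_forall_ne fun m hm => (update_of_ne hm v a).symm
  have hb : hammingDist b (update b j w) ≤ 1 :=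
    hammingDist_le_one_of_forall_ne fun m hm => (update_of_ne hm w b).symm
  rw [stepRel_hypercube_iff]
  rcases c with u | u
  · exact (hammingDist_fill_le s _ _ u).trans ha
  · exact (hammingDist_fill_le t _ _ u).trans hb

lemma exists_formation_comp_eq {s t : Finset (Fin n)}
    {σ : Fin k → ({i // i ∉ s} → Bool) ⊕ ({i // i ∉ t} → Bool)} (hσ : Surjective σ)
    {a b r : Fin n → Bool} (h : hammingDistOn s a r = 0 ∨ hammingDistOn t b r = 0) :
    ∃ i, (formation s t a b ∘ σ) i = r := by
  rcases h with h | h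
  · obtain ⟨i, hi⟩ := hσ (.inl fun m => r m)
    exact ⟨i, by simp [hi, formation, fill_eq_of_eqOn (hammingDistOn_eq_zero.1 h)]⟩
  · obtain ⟨i, hi⟩ := hσ (.inr fun m => r m)
    exact ⟨i, by simp [hi, formation, fill_eq_of_eqOn (hammingDistOn_eq_zero.1 h)]⟩

lemma catchIn_formation_comp {s t : Finset (Fin n)} (hst : Disjoint s t)
    {σ : Fin k → ({i // i ∉ s} → Bool) ⊕ ({i // i ∉ t} → Bool)} (hσ : Surjective σ) (m : ℕ)
    (a b r : Fin n → Bool) (h : hammingDistOn s a r + hammingDistOn t b r ≤ m) :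
    CatchIn (hypercube n) m (formation s t a b ∘ σ) r := by
  induction m generalizing a b r with
  | zero => exact exists_formation_comp_eq hσ (by omega)
  | succ m ih =>
    by_cases h0 : hammingDistOn s a r = 0 ∨ hammingDistOn t b r = 0
    · exact .inl (exists_formation_comp_eq hσ h0)
    rw [not_or] at h0
    obtain ⟨i, his, hi⟩ := not_forall₂.1 (mt hammingDistOn_eq_zero.2 h0.1)
    obtain ⟨j, hjt, hj⟩ := not_forall₂.1 (mt hammingDistOn_eq_zero.2 h0.2)
    refine .inr ⟨_, fun c => stepRel_formation_update s t a b i j (r i) (r j) (σ c),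
      .inr fun r' hr' => ih _ _ r' ?_⟩
    have hs := hammingDistOn_update_add_one his hi
    have ht := hammingDistOn_update_add_one hjt hj
    have hs' := hammingDistOn_triangle s (update a i (r i)) r r'
    have ht' := hammingDistOn_triangle t (update b j (r j)) r r'
    have hr := (hammingDistOn_add_le_hammingDist hst r r').trans (stepRel_hypercube_iff.1 hr')
    omega

lemma copsWinIn_hypercube_of_disjoint {s t : Finset (Fin n)} (hst : Disjoint s t)
    (hk : 2 ^ (n - #s) + 2 ^ (n - #t) ≤ k) : CopsWinIn (hypercube n) k (#s + #t) := by
  obtain ⟨f⟩ := Function.Embedding.nonempty_of_card_le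
    (α := ({i // i ∉ s} → Bool) ⊕ ({i // i ∉ t} → Bool)) (β := Fin k) (by simpa using hk)
  refine ⟨formation s t (fun _ => false) (fun _ => false) ∘ invFun f, fun r => ?_⟩
  exact catchIn_formation_comp hst (invFun_surjective f.injective) _ _ _ _
    (add_le_add (hammingDistOn_le_card _ _ _) (hammingDistOn_le_card _ _ _))

lemma copsWinIn_hypercube (hk : 2 ^ (n / 2 + 2) ≤ k) : CopsWinIn (hypercube n) k n := by
  obtain ⟨s, -, hs⟩ := exists_subset_card_eq (s := (univ : Finset (Fin n))) (n := n / 2)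
    (by simp; omega)
  have hsc : #sᶜ = n - n / 2 := by rw [card_compl, hs, Fintype.card_fin]
  have hcops : 2 ^ (n - #s) + 2 ^ (n - #sᶜ) ≤ k := by
    have hpow : 2 ^ (n - n / 2) ≤ 2 ^ (n / 2 + 1) := Nat.pow_le_pow_right two_pos (by omega)
    rw [hsc, hs, Nat.sub_sub_self (Nat.div_le_self n 2)]
    rw [pow_succ] at hpow
    rw [pow_add] at hk
    omega
  simpa [hsc, hs, Nat.add_sub_cancel' (Nat.div_le_self n 2)] using
    copsWinIn_hypercube_of_disjoint disjoint_compl_right hcops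

end Strategy

lemma not_catchIn_of_lt_hammingDist {n k : ℕ} (t : ℕ) (c : Fin k → Fin n → Bool)
    (r : Fin n → Bool) (h : ∀ i, t < hammingDist (c i) r) : ¬CatchIn (hypercube n) t c r := by
  have hne : ∀ c : Fin k → Fin n → Bool, (∀ i, 0 < hammingDist (c i) r) → ¬∃ i, c i = r :=
    fun c h ⟨i, hi⟩ => (h i).ne' (hammingDist_eq_zero.2 hi)
  induction t generalizing c with
  | zero => exact hne c h
  | succ t ih =>
    rintro (hcap | ⟨c', hc', hrest⟩)
    · exact hne c (fun i => by have := h i; omega) hcap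
    have hfar : ∀ i, t < hammingDist (c' i) r := fun i => by
      have := stepRel_hypercube_iff.1 (hc' i)
      have := hammingDist_triangle (c i) (c' i) r
      have := h i
      omega
    rcases hrest with hcap | hcatch
    · exact hne c' (fun i => by have := hfar i; omega) hcap
    · exact ih c' hfar (hcatch r (.inl rfl))

lemma card_hammingBall_le {ι : Type*} [Fintype ι] [DecidableEq ι] (x : ι → Bool) (t : ℕ) :
    #{y | hammingDist x y ≤ t} ≤ ∑ s ∈ range (t + 1), (Fintype.card ι).choose s := by
  calc #{y | hammingDist x y ≤ t}
      ≤ #((range (t + 1)).biUnion fun s => powersetCard s univ) := by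
        refine card_le_card_of_injOn (fun y => ({i | x i ≠ y i} : Finset ι)) (fun y hy => ?_)
          fun y _ z _ h => ?_
        · simp only [coe_filter, mem_univ, true_and, Set.mem_ofPred_eq] at hy
          simp only [coe_biUnion, coe_range, Set.mem_Iio, Set.mem_iUnion, mem_coe,
            mem_powersetCard, subset_univ, true_and, exists_prop]
          exact ⟨_, Nat.lt_succ_of_le hy, rfl⟩
        · funext i
          have := Finset.ext_iff.1 h i
          simp only [mem_filter, mem_univ, true_and] at this
          revert this
          cases x i <;> cases y i <;> cases z i <;> decide
    _ ≤ ∑ s ∈ range (t + 1), #(powersetCard s (univ : Finset ι)) := card_biUnion_le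
    _ = ∑ s ∈ range (t + 1), (Fintype.card ι).choose s := by simp [card_powersetCard]

lemma two_pow_le_mul_sum_choose_of_copsWinIn {n k t : ℕ} (h : CopsWinIn (hypercube n) k t) :
    2 ^ n ≤ k * ∑ s ∈ range (t + 1), n.choose s := by
  obtain ⟨c, hc⟩ := h
  have hcover : ∀ r, ∃ i, hammingDist (c i) r ≤ t := fun r => by_contra fun hfar =>
    not_catchIn_of_lt_hammingDist t c r (fun i => lt_of_not_ge fun hi => hfar ⟨i, hi⟩) (hc r)
  calc 2 ^ n = #(univ : Finset (Fin n → Bool)) := by simp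
    _ ≤ #(univ.biUnion fun i => {y | hammingDist (c i) y ≤ t}) :=
        card_le_card fun r _ => by simpa using hcover r
    _ ≤ ∑ i, #{y | hammingDist (c i) y ≤ t} := card_biUnion_le
    _ ≤ ∑ _i : Fin k, ∑ s ∈ range (t + 1), n.choose s :=
        sum_le_sum fun i _ => by simpa using card_hammingBall_le (c i) t
    _ = k * ∑ s ∈ range (t + 1), n.choose s := by simp

lemma sum_choose_mul_pow_le_one {n t : ℕ} {p : ℝ} (hp₀ : 0 ≤ p) (hp : p ≤ 1 / 2) (htn : t ≤ n) :
    (∑ s ∈ range (t + 1), (n.choose s : ℝ)) * (p ^ t * (1 - p) ^ (n - t)) ≤ 1 := by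
  have hpq : p ≤ 1 - p := by linarith
  have hterm : ∀ s ∈ range (t + 1), p ^ t * (1 - p) ^ (n - t) ≤ p ^ s * (1 - p) ^ (n - s) := by
    intro s hs
    have hst : s ≤ t := Nat.lt_succ_iff.1 (mem_range.1 hs)
    calc p ^ t * (1 - p) ^ (n - t) = p ^ s * p ^ (t - s) * (1 - p) ^ (n - t) := by
          rw [← pow_add, Nat.add_sub_cancel' hst]
      _ ≤ p ^ s * (1 - p) ^ (t - s) * (1 - p) ^ (n - t) :=
          mul_le_mul_of_nonneg_right (mul_le_mul_of_nonneg_left (pow_le_pow_left₀ hp₀ hpq _)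
            (pow_nonneg hp₀ _)) (pow_nonneg (hp₀.trans hpq) _)
      _ = p ^ s * (1 - p) ^ (n - s) := by
          rw [mul_assoc, ← pow_add]; congr 2; omega
  calc (∑ s ∈ range (t + 1), (n.choose s : ℝ)) * (p ^ t * (1 - p) ^ (n - t))
      ≤ ∑ s ∈ range (t + 1), p ^ s * (1 - p) ^ (n - s) * n.choose s := by
        rw [sum_mul]
        exact sum_le_sum fun s hs => (mul_comm _ _).trans_le
          (mul_le_mul_of_nonneg_right (hterm s hs) (Nat.cast_nonneg _))
    _ ≤ ∑ s ∈ range (n + 1), p ^ s * (1 - p) ^ (n - s) * n.choose s :=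
        sum_le_sum_of_subset_of_nonneg (range_subset_range.2 (by omega)) fun _ _ _ => by
          have : 0 ≤ 1 - p := by linarith
          positivity
    _ = 1 := by rw [← add_pow, add_sub_cancel, one_pow]

lemma sum_choose_le_exp_binEntropy {n t : ℕ} {p : ℝ} (hp₀ : 0 < p) (hp : p ≤ 1 / 2)
    (ht : t ≤ p * n) : ∑ s ∈ range (t + 1), (n.choose s : ℝ) ≤ exp (n * binEntropy p) := by
  have htn : t ≤ n := by
    have : (t : ℝ) ≤ n := ht.trans (by nlinarith [(Nat.cast_nonneg n : (0 : ℝ) ≤ n)])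
    exact_mod_cast this
  have hq : 0 < 1 - p := by linarith
  have hprod : exp (-(n * binEntropy p)) ≤ p ^ t * (1 - p) ^ (n - t) := by
    rw [← log_le_log_iff (exp_pos _) (by positivity), log_exp, log_mul (by positivity)
      (by positivity), log_pow, log_pow, Nat.cast_sub htn]
    have hlog : log p ≤ log (1 - p) := log_le_log hp₀ (by linarith)
    simp only [binEntropy, log_inv]
    nlinarith [mul_nonneg (sub_nonneg.2 ht) (sub_nonneg.2 hlog)]
  calc ∑ s ∈ range (t + 1), (n.choose s : ℝ)
      = (∑ s ∈ range (t + 1), (n.choose s : ℝ)) * exp (-(n * binEntropy p)) *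
          exp (n * binEntropy p) := by rw [mul_assoc, ← exp_add, neg_add_cancel, exp_zero, mul_one]
    _ ≤ (∑ s ∈ range (t + 1), (n.choose s : ℝ)) * (p ^ t * (1 - p) ^ (n - t)) *
          exp (n * binEntropy p) := by gcongr
    _ ≤ exp (n * binEntropy p) := by
        have := sum_choose_mul_pow_le_one hp₀.le hp htn
        nlinarith [exp_pos (n * binEntropy p)]

lemma lt_of_copsWinIn_hypercube {n k t : ℕ} {ε δ : ℝ} (hδ₀ : 0 < δ) (hδ : δ ≤ 1 / 2)
    (hH : binEntropy δ < ε * log 2) (hn : 0 < n) (hk : (k : ℝ) ≤ 2 ^ ((n : ℝ) * (1 - ε)))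
    (h : CopsWinIn (hypercube n) k t) : δ * n < t := by
  by_contra! ht
  have hcount : (2 : ℝ) ^ n ≤ k * ∑ s ∈ range (t + 1), (n.choose s : ℝ) := by
    exact_mod_cast two_pow_le_mul_sum_choose_of_copsWinIn h
  have hbound : (2 : ℝ) ^ n ≤ 2 ^ ((n : ℝ) * (1 - ε)) * exp (n * binEntropy δ) :=
    hcount.trans (mul_le_mul hk (sum_choose_le_exp_binEntropy hδ₀ hδ ht) (by positivity)
      (by positivity))
  rw [← rpow_natCast, rpow_def_of_pos two_pos, rpow_def_of_pos two_pos, ← exp_add,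
    exp_le_exp] at hbound
  have : (0 : ℝ) < n := Nat.cast_pos.2 hn
  nlinarith

lemma exists_pos_binEntropy_lt {c : ℝ} (hc : 0 < c) :
    ∃ δ, 0 < δ ∧ δ ≤ 1 / 2 ∧ binEntropy δ < c := by
  have hlt : ∀ᶠ δ in 𝓝 0, binEntropy δ < c :=
    binEntropy_continuous.continuousAt.eventually_lt continuousAt_const (by simpa using hc)
  obtain ⟨δ, ⟨hδ₀, hδ⟩, hH⟩ := (Filter.Eventually.and (Ioc_mem_nhdsGT one_half_pos)
    (hlt.filter_mono nhdsWithin_le_nhds)).exists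
  exact ⟨δ, hδ₀, hδ, hH⟩

lemma gfun_eq_binEntropy (x : ℝ) : gfun x = (binEntropy x - binEntropy (2 * x)) / log 2 := by
  simp only [gfun, binEntropy, logb, log_inv]
  ring

lemma log_two_div_two_le_binEntropy_inv_eight : log 2 / 2 ≤ binEntropy 8⁻¹ := by
  have h7 : log 2 ≤ 7 * log (8 / 7) := by
    calc log 2 ≤ log ((8 / 7) ^ 7) := log_le_log two_pos (by norm_num)
      _ = 7 * log (8 / 7) := by rw [log_pow]; norm_num
  have h8 : log 8 = 3 * log 2 := by
    rw [show (8 : ℝ) = 2 ^ 3 by norm_num, log_pow]; norm_num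
  simp only [binEntropy, inv_inv]
  rw [show (1 - 8⁻¹ : ℝ)⁻¹ = 8 / 7 by norm_num, h8]
  linarith

lemma bconst_le_half : bconst ≤ 1 / 2 := by
  have hc₀ : 8⁻¹ ≤ cconst := by
    have : √2 ≤ 3 / 2 := sqrt_le_iff.2 ⟨by norm_num, by norm_num⟩
    rw [cconst]; linarith
  have hc₁ : cconst ≤ 2⁻¹ := by
    have := sqrt_nonneg 2
    rw [cconst]; linarith
  have hH : binEntropy 8⁻¹ ≤ binEntropy cconst :=
    binEntropy_strictMonoOn.monotoneOn ⟨by norm_num, by norm_num⟩ ⟨by linarith, hc₁⟩ hc₀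
  have hH₂ := binEntropy_le_log_two (p := 2 * cconst)
  have := log_two_div_two_le_binEntropy_inv_eight
  rw [bconst, gfun_eq_binEntropy, ← neg_div, div_le_iff₀ (log_pos one_lt_two)]
  linarith

/-- For any fixed `ε > 0`, `capt_k(Q_n) = Θ(n)` uniformly over all
`2^{n(1-b+ε)} < k ≤ 2^{n(1-ε)}`. -/
theorem captTime_hypercube_theta_n (ε : ℝ) (hε : 0 < ε) :
    ∃ C₁ C₂ : ℝ, 0 < C₁ ∧ 0 < C₂ ∧ ∃ N : ℕ, ∀ n : ℕ, N ≤ n → ∀ k : ℕ,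
      (2 : ℝ) ^ ((n : ℝ) * (1 - bconst + ε)) < (k : ℝ) →
      (k : ℝ) ≤ (2 : ℝ) ^ ((n : ℝ) * (1 - ε)) →
      C₁ * n ≤ (captTime (hypercube n) k : ℝ) ∧
      (captTime (hypercube n) k : ℝ) ≤ C₂ * n := by
  obtain ⟨δ, hδ₀, hδ, hH⟩ := exists_pos_binEntropy_lt (mul_pos hε (log_pos one_lt_two))
  refine ⟨δ, 1, hδ₀, one_pos, ⌈2 / ε⌉₊, fun n hn k hk₁ hk₂ => ?_⟩
  have hnε : 2 ≤ n * ε := (div_le_iff₀ hε).1 ((Nat.le_ceil _).trans (by exact_mod_cast hn))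
  have hn₀ : 0 < n := Nat.pos_of_ne_zero (by rintro rfl; simp at hnε; linarith)
  have hexp : ((n / 2 + 2 : ℕ) : ℝ) ≤ n * (1 - bconst + ε) := by
    have := Nat.cast_div_le (m := n) (n := 2) (α := ℝ)
    have := bconst_le_half
    push_cast
    nlinarith
  have hk : 2 ^ (n / 2 + 2) ≤ k := by
    have : ((2 ^ (n / 2 + 2) : ℕ) : ℝ) < k := by
      rw [Nat.cast_pow, Nat.cast_ofNat, ← rpow_natCast]
      exact (rpow_le_rpow_of_exponent_le one_le_two hexp).trans_lt hk₁
    exact_mod_cast this.le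
  have hwin := copsWinIn_hypercube hk
  refine ⟨(lt_of_copsWinIn_hypercube hδ₀ hδ hH hn₀ hk₂ (copsWinIn_captTime_s18 hwin)).le, ?_⟩
  rw [one_mul]
  exact_mod_cast captTime_le hwin
end
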